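/- arXiv:1409.4872 — 9 statements merged into one kernel-verified Lean document; each statement's English description precedes it below -/
import Mathlib

section
/- Every noncrossing tree on vertex set [n] with at least one edge has a terminal edge, i.e., an edge {i,j} that is the furthest clockwise edge at both of its endpoints i and j. -/
/-- A graph on `Fin n` (vertices drawn left to right on a line) is noncrossing if it
has no pair of edges `{a,c}` and `{b,d}` with `a < b < c < d`. -/
def Noncrossing {n : ℕ} (G : SimpleGraph (Fin n)) : Prop :=
  ∀ a b c d : Fin n, a < b → b < c → c < d → G.Adj a c → G.Adj b d → False

/-- The edge `{i,j}` (with `i < j`) is the furthest clockwise edge at vertex `i`: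
in the standard drawing, the clockwise order of the edges at `i` consists of the edges
to smaller neighbors in decreasing order followed by the edges to larger neighbors in
decreasing order, so the furthest clockwise edge at `i` goes to the smallest neighbor
larger than `i` if one exists, and otherwise to the smallest neighbor. -/
def FurthestClockwiseAt {n : ℕ} (G : SimpleGraph (Fin n)) (i j : Fin n) : Prop :=
  G.Adj i j ∧
  (if i < j then
      -- `j` is the smallest neighbor of `i` exceeding `i`
      ∀ k, G.Adj i k → i < k → j ≤ k
    else
      -- no neighbor of `i` exceeds `i`, and `j` is the smallest neighbor of `i`
      (∀ k, G.Adj i k → k < i) ∧ (∀ k, G.Adj i k → j ≤ k))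

/-- An edge is terminal if it is the furthest clockwise edge at both of its endpoints. -/
def TerminalEdge {n : ℕ} (G : SimpleGraph (Fin n)) (i j : Fin n) : Prop :=
  FurthestClockwiseAt G i j ∧ FurthestClockwiseAt G j i

/-!
Let `j` be the leftmost vertex without a neighbor to its right and `i` its leftmost neighbor;
then `{i,j}` is furthest clockwise at `j`. Were there an edge from `i` to some `k` with
`i < k < j`, let `x` be the rightmost vertex left of `j` that can be reached from `i` without
the edge `{i,j}`. By the choice of `j`, `x` has a neighbor `m > x`. Now `m < j` contradicts
the maximality of `x`, `m = j` contradicts that `{i,j}` is a bridge of the tree, and `m > j`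
makes `{x,m}` cross `{i,j}`.
-/

open SimpleGraph Finset

namespace Noncrossing

variable {n : ℕ} {G : SimpleGraph (Fin n)}

theorem le_of_adj_of_isBridge (hnc : Noncrossing G) {i j : Fin n} (hij : G.Adj i j)
    (hbridge : G.IsBridge s(i, j))
    (hright : ∀ x, i < x → x < j → ∃ m, G.Adj x m ∧ x < m)
    {k : Fin n} (hik : G.Adj i k) (hk : i < k) : j ≤ k := by
  classical
  by_contra! hkj
  set H := G.deleteEdges {s(i, j)}
  set R := univ.filter fun x => x < j ∧ H.Reachable i x
  have hkR : k ∈ R := by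
    simp only [R, mem_filter, mem_univ, true_and]
    refine ⟨hkj, (deleteEdges_adj.2 ⟨hik, ?_⟩).reachable⟩
    simp [hkj.ne, hij.ne]
  obtain ⟨x, hxR, hxmax⟩ := R.exists_max_image id ⟨k, hkR⟩
  simp only [R, mem_filter, mem_univ, true_and] at hxR
  obtain ⟨hxj, hix_reach⟩ := hxR
  have hix : i < x := hk.trans_le (hxmax k hkR)
  obtain ⟨m, hxm, hxm_lt⟩ := hright x hix hxj
  have him_reach : H.Reachable i m := by
    refine hix_reach.trans (deleteEdges_adj.2 ⟨hxm, ?_⟩).reachable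
    simp [hix.ne', hxj.ne]
  rcases lt_trichotomy m j with hmj | rfl | hjm
  · exact (hxmax m (by simp [R, hmj, him_reach])).not_gt hxm_lt
  · exact hbridge him_reach
  · exact hnc i x j m hix hxj hjm hij hxm

end Noncrossing

/-- Every noncrossing tree on `[n]` with at least one edge has a terminal edge. -/
theorem noncrossing_tree_exists_terminal_edge {n : ℕ} (T : SimpleGraph (Fin n))
    (hT : T.IsTree) (hnc : Noncrossing T) (hn : 2 ≤ n) :
    ∃ i j : Fin n, i < j ∧ TerminalEdge T i j := by
  classical
  obtain ⟨n, rfl⟩ : ∃ m, n = m + 1 := ⟨n - 1, by omega⟩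
  have : Nontrivial (Fin (n + 1)) := Fin.nontrivial_iff_two_le.2 hn
  set F := univ.filter fun v : Fin (n + 1) => ∀ w, T.Adj v w → w < v
  have hlast : Fin.last n ∈ F := by
    simpa [F] using fun w hw => lt_of_le_of_ne (Fin.le_last w) hw.ne.symm
  obtain ⟨j, hjF, hjmin⟩ := F.exists_min_image id ⟨_, hlast⟩
  simp only [F, mem_filter, mem_univ, true_and] at hjF
  obtain ⟨w, hjw⟩ := hT.connected.preconnected.exists_adj_of_nontrivial j
  obtain ⟨i, hji, himin⟩ := (T.neighborFinset j).exists_min_image id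
    ⟨w, (mem_neighborFinset _ _ _).2 hjw⟩
  rw [mem_neighborFinset] at hji
  have hij : i < j := hjF i hji
  have hright : ∀ x, i < x → x < j → ∃ m, T.Adj x m ∧ x < m := by
    intro x _ hxj
    have hxF : x ∉ F := fun hx => (hjmin x hx).not_gt hxj
    simp only [F, mem_filter, mem_univ, true_and, not_forall, not_lt] at hxF
    obtain ⟨m, hxm, hmx⟩ := hxF
    exact ⟨m, hxm, lt_of_le_of_ne hmx hxm.ne⟩
  refine ⟨i, j, hij, ⟨hji.symm, ?_⟩, ⟨hji, ?_⟩⟩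
  · rw [if_pos hij]
    exact fun k => hnc.le_of_adj_of_isBridge hji.symm
      (isAcyclic_iff_forall_adj_isBridge.1 hT.isAcyclic hji.symm) hright
  · rw [if_neg hij.not_gt]
    exact ⟨hjF, fun k hk => himin k (mem_neighborFinset _ _ _ |>.2 hk)⟩
end

section
/- The number of noncrossing trees T on vertex set [n] such that every vertex i has at most one neighbor j in T with j > i is the Catalan number C_{n-1} = (1/n)·binomial(2n−2, n−1). -/
/-- `L.getD i 0` is the parent of vertex `i` in a plane tree on `0, …, L.length` rooted at
`L.length`, and the arcs `(i, L.getD i 0)` do not cross. -/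
def IsParentList (L : List ℕ) : Prop :=
  ∀ i < L.length, i < L.getD i 0 ∧ L.getD i 0 ≤ L.length ∧
    ∀ j, i < j → j < L.getD i 0 → L.getD j 0 ≤ L.getD i 0

/-- Shifts `A` to the vertices `1, …, |A|` and `B` past them, and hangs a new vertex `0` below
vertex `|A| + 1`: this assembles the parent list of a binary tree from those of its subtrees. -/
def joinParentLists (A B : List ℕ) : List ℕ :=
  (A.length + 1) :: (A.map (· + 1) ++ B.map (· + (A.length + 1)))

section join
variable {A B : List ℕ}

@[simp] lemma length_joinParentLists :
    (joinParentLists A B).length = A.length + 1 + B.length := by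
  simp only [joinParentLists, List.length_cons, List.length_append, List.length_map]
  omega

lemma getD_joinParentLists_zero : (joinParentLists A B).getD 0 0 = A.length + 1 := rfl

lemma getD_joinParentLists_succ {a : ℕ} (ha : a < A.length) :
    (joinParentLists A B).getD (a + 1) 0 = A.getD a 0 + 1 := by
  simp [joinParentLists, List.getElem?_append, ha]

lemma getD_joinParentLists_add {b : ℕ} (hb : b < B.length) :
    (joinParentLists A B).getD (A.length + 1 + b) 0 = B.getD b 0 + (A.length + 1) := by
  rw [Nat.add_right_comm]
  simp [joinParentLists, hb]

lemma IsParentList.of_join_left (h : IsParentList (joinParentLists A B)) : IsParentList A := by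
  intro a ha
  obtain ⟨h₁, -, h₃⟩ := h (a + 1) (by rw [length_joinParentLists]; omega)
  have hle := (h 0 (by simp)).2.2 (a + 1) (by omega)
  simp only [getD_joinParentLists_succ ha, getD_joinParentLists_zero] at h₁ h₃ hle
  refine ⟨by omega, by omega, fun j haj hj => ?_⟩
  have := h₃ (j + 1) (by omega) (by omega)
  rw [getD_joinParentLists_succ (by omega)] at this
  omega

lemma IsParentList.of_join_right (h : IsParentList (joinParentLists A B)) : IsParentList B := by
  intro b hb
  obtain ⟨h₁, h₂, h₃⟩ := h (A.length + 1 + b) (by rw [length_joinParentLists]; omega)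
  simp only [getD_joinParentLists_add hb, length_joinParentLists] at h₁ h₂ h₃
  refine ⟨by omega, by omega, fun j hbj hj => ?_⟩
  have := h₃ (A.length + 1 + j) (by omega) (by omega)
  rw [getD_joinParentLists_add (by omega)] at this
  omega

lemma IsParentList.join (hA : IsParentList A) (hB : IsParentList B) :
    IsParentList (joinParentLists A B) := by
  intro k hk
  rw [length_joinParentLists] at hk ⊢
  rcases Nat.lt_or_ge k (A.length + 1) with hkA | hkB
  · cases k with
    | zero =>
      rw [getD_joinParentLists_zero]
      refine ⟨by omega, by omega, fun j hj hjA => ?_⟩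
      obtain ⟨a, rfl⟩ := Nat.exists_eq_add_of_le' hj
      rw [getD_joinParentLists_succ (by omega)]
      have := hA a (by omega)
      omega
    | succ a =>
      obtain ⟨h₁, h₂, h₃⟩ := hA a (by omega)
      rw [getD_joinParentLists_succ (by omega)]
      refine ⟨by omega, by omega, fun j haj hj => ?_⟩
      obtain ⟨j, rfl⟩ := Nat.exists_eq_add_of_le' (show 1 ≤ j by omega)
      rw [getD_joinParentLists_succ (by omega)]
      have := h₃ j (by omega) (by omega)
      omega
  · obtain ⟨b, rfl⟩ := Nat.exists_eq_add_of_le hkB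
    obtain ⟨h₁, h₂, h₃⟩ := hB b (by omega)
    rw [getD_joinParentLists_add (by omega)]
    refine ⟨by omega, by omega, fun j hbj hj => ?_⟩
    obtain ⟨j, rfl⟩ := Nat.exists_eq_add_of_le (show A.length + 1 ≤ j by omega)
    rw [getD_joinParentLists_add (by omega)]
    have := h₃ j (by omega) (by omega)
    omega

lemma joinParentLists_inj {A' B' : List ℕ} :
    joinParentLists A B = joinParentLists A' B' ↔ A = A' ∧ B = B' := by
  refine ⟨fun h => ?_, by rintro ⟨rfl, rfl⟩; rfl⟩
  simp only [joinParentLists, List.cons.injEq, Nat.add_right_cancel_iff] at h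
  obtain ⟨hlen, h⟩ := h
  rw [hlen] at h
  obtain ⟨hA, hB⟩ := List.append_inj h (by simp [hlen])
  exact ⟨List.map_injective_iff.mpr (add_left_injective 1) hA,
    List.map_injective_iff.mpr (add_left_injective _) hB⟩

lemma IsParentList.exists_joinParentLists_eq {c : ℕ} {M : List ℕ} (h : IsParentList (c :: M)) :
    ∃ A B, joinParentLists A B = c :: M := by
  have hM : ∀ k (hk : k < M.length), k + 1 < M[k] := fun k hk => by
    simpa [hk] using (h (k + 1) (by simp [hk])).1
  have hc : 0 < c ∧ c ≤ M.length + 1 := by simpa using (h 0 (by simp)).imp_right And.left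
  refine ⟨(M.take (c - 1)).map (· - 1), (M.drop (c - 1)).map (· - c), ?_⟩
  have hA : ((M.take (c - 1)).map (· - 1)).length + 1 = c := by
    rw [List.length_map, List.length_take]; omega
  rw [joinParentLists, hA, List.map_map, List.map_map]
  conv_rhs => rw [← List.take_append_drop (c - 1) M]
  congr 2 <;> refine (List.map_congr_left fun x hx => ?_).trans (List.map_id _)
  · obtain ⟨k, hk, rfl⟩ := List.mem_iff_getElem.mp hx
    have := hM k (by rw [List.length_take] at hk; omega)
    simp only [List.getElem_take, Function.comp_apply, id_eq]
    omega
  · obtain ⟨k, hk, rfl⟩ := List.mem_iff_getElem.mp hx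
    have := hM (c - 1 + k) (by rw [List.length_drop] at hk; omega)
    simp only [List.getElem_drop, Function.comp_apply, id_eq]
    omega

end join

namespace BinaryTree

def parentList : BinaryTree Unit → List ℕ
  | nil => []
  | node _ l r => joinParentLists l.parentList r.parentList

lemma length_parentList (t : BinaryTree Unit) : t.parentList.length = t.numNodes := by
  induction t with
  | nil => rfl
  | node _ l r ihl ihr =>
    simp only [parentList, length_joinParentLists, ihl, ihr, numNodes]
    omega

lemma isParentList_parentList (t : BinaryTree Unit) : IsParentList t.parentList := by
  induction t with
  | nil => simp [IsParentList, parentList]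
  | node _ l r ihl ihr => exact ihl.join ihr

lemma parentList_injective : Function.Injective parentList := by
  intro t t' h
  induction t generalizing t' with
  | nil => cases t' <;> simp_all [parentList, joinParentLists]
  | node _ l r ihl ihr =>
    cases t' with
    | nil => simp [parentList, joinParentLists] at h
    | node _ l' r' =>
      obtain ⟨hl, hr⟩ := joinParentLists_inj.mp h
      rw [ihl hl, ihr hr]

lemma exists_parentList_eq {L : List ℕ} (hL : IsParentList L) : ∃ t, parentList t = L := by
  induction hn : L.length using Nat.strong_induction_on generalizing L with
  | _ n ih =>
  cases L with
  | nil => exact ⟨nil, rfl⟩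
  | cons c M =>
    obtain ⟨A, B, hAB⟩ := hL.exists_joinParentLists_eq
    rw [← hAB] at hL hn
    have hlen := length_joinParentLists (A := A) (B := B)
    obtain ⟨l, rfl⟩ := ih _ (by omega) hL.of_join_left rfl
    obtain ⟨r, rfl⟩ := ih _ (by omega) hL.of_join_right rfl
    exact ⟨node () l r, hAB⟩

end BinaryTree

lemma card_parentLists (m : ℕ) :
    Nat.card {L : List ℕ // IsParentList L ∧ L.length = m} = catalan m := by
  rw [← BinaryTree.treesOfNumNodesEq_card_eq_catalan, ← Nat.card_eq_finsetCard]
  refine (Nat.card_eq_of_bijective (fun t => ⟨t.1.parentList, t.1.isParentList_parentList,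
    by rw [t.1.length_parentList, ← BinaryTree.mem_treesOfNumNodesEq]; exact t.2⟩) ⟨?_, ?_⟩).symm
  · intro t t' h
    exact Subtype.ext (BinaryTree.parentList_injective (congrArg Subtype.val h))
  · rintro ⟨L, hL, rfl⟩
    obtain ⟨t, rfl⟩ := BinaryTree.exists_parentList_eq hL
    exact ⟨⟨t, by simp [BinaryTree.length_parentList]⟩, rfl⟩

lemma ncard_setOf_exists_gt_add_one {V : Type*} [LinearOrder V] [Finite V] [Nonempty V] :
    {i : V | ∃ k, i < k}.ncard + 1 = Nat.card V := by
  obtain ⟨top, htop⟩ := Finite.exists_max (id : V → V)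
  have : {i : V | ∃ k, i < k} = {top}ᶜ := by
    ext i
    simp only [Set.mem_ofPred_eq, Set.mem_compl_iff, Set.mem_singleton_iff]
    exact ⟨fun ⟨k, hk⟩ h => (htop k).not_gt (h ▸ hk), fun h => ⟨top, lt_of_le_of_ne (htop i) h⟩⟩
  rw [this, Set.ncard_compl, Set.ncard_singleton]
  have : 0 < Nat.card V := Nat.card_pos
  omega

namespace SimpleGraph

variable {V : Type*} [LinearOrder V]

def AtMostOneLargerNeighbor (G : SimpleGraph V) : Prop :=
  ∀ i j j' : V, G.Adj i j → G.Adj i j' → i < j → i < j' → j = j'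

lemma ext_of_adj_iff_of_lt {G H : SimpleGraph V} (h : ∀ i j, i < j → (G.Adj i j ↔ H.Adj i j)) :
    G = H := by
  ext i j
  rcases lt_trichotomy i j with hij | rfl | hij
  · exact h i j hij
  · simp
  · rw [G.adj_comm, H.adj_comm]
    exact h j i hij

variable {G : SimpleGraph V}

lemma AtMostOneLargerNeighbor.card_edgeSet (hG : G.AtMostOneLargerNeighbor) :
    Nat.card G.edgeSet = {i | ∃ j, G.Adj i j ∧ i < j}.ncard := by
  rw [← Nat.card_coe_set_eq]
  refine (Nat.card_eq_of_bijective (fun i => ⟨s(i.1, i.2.choose), i.2.choose_spec.1⟩) ⟨?_, ?_⟩).symm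
  · rintro ⟨i, hi⟩ ⟨i', hi'⟩ h
    have hlt := hi.choose_spec.2
    have hlt' := hi'.choose_spec.2
    rcases Sym2.eq_iff.mp (congrArg Subtype.val h) with ⟨h₁, -⟩ | ⟨h₁, h₂⟩
    · exact Subtype.ext h₁
    · rw [h₂] at hlt
      rw [← h₁] at hlt'
      exact absurd hlt (lt_asymm hlt')
  · rintro ⟨e, he⟩
    obtain ⟨a, b, hab, rfl⟩ : ∃ a b, a < b ∧ e = s(a, b) := by
      induction e using Sym2.inductionOn with
      | _ a b =>
        rcases lt_or_gt_of_ne (G.ne_of_adj he) with h | h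
        · exact ⟨a, b, h, rfl⟩
        · exact ⟨b, a, h, Sym2.eq_swap⟩
    have hb : ∃ j, G.Adj a j ∧ a < j := ⟨b, he, hab⟩
    refine ⟨⟨a, hb⟩, Subtype.ext ?_⟩
    simp only [hG a _ b hb.choose_spec.1 he hb.choose_spec.2 hab]

lemma AtMostOneLargerNeighbor.isTree_of_connected [Finite V] (hG : G.AtMostOneLargerNeighbor)
    (hc : G.Connected) : G.IsTree := by
  have : Nonempty V := hc.nonempty
  refine isTree_iff_connected_and_card.mpr ⟨hc, le_antisymm ?_ hc.card_vert_le_card_edgeSet_add_one⟩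
  rw [hG.card_edgeSet, ← ncard_setOf_exists_gt_add_one]
  have hsub : {i | ∃ j, G.Adj i j ∧ i < j} ⊆ {i | ∃ k, i < k} := fun i ⟨j, _, hj⟩ => ⟨j, hj⟩
  exact Nat.add_le_add_right (Set.ncard_le_ncard hsub) 1

lemma IsTree.exists_adj_gt [Finite V] (hT : G.IsTree) (hG : G.AtMostOneLargerNeighbor) {i : V}
    (hi : ∃ k, i < k) : ∃ j, G.Adj i j ∧ i < j := by
  have : Nonempty V := hT.connected.nonempty
  have hsub : {i | ∃ j, G.Adj i j ∧ i < j} ⊆ {i | ∃ k, i < k} := fun i ⟨j, _, hj⟩ => ⟨j, hj⟩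
  have hcard := (isTree_iff_connected_and_card.mp hT).2
  rw [hG.card_edgeSet, ← ncard_setOf_exists_gt_add_one] at hcard
  exact (Set.eq_of_subset_of_ncard_le hsub (by omega)).superset hi

end SimpleGraph

def parentGraph (m : ℕ) (L : List ℕ) : SimpleGraph (Fin (m + 1)) :=
  SimpleGraph.fromRel fun i j => (i : ℕ) < L.length ∧ L.getD i 0 = j

section parentGraph

variable {m : ℕ} {L : List ℕ}

lemma parentGraph_adj_of_lt (hL : IsParentList L) {i j : Fin (m + 1)} (hij : i < j) :
    (parentGraph m L).Adj i j ↔ (i : ℕ) < L.length ∧ L.getD i 0 = j := by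
  rw [parentGraph, SimpleGraph.fromRel_adj]
  refine ⟨fun ⟨_, h⟩ => h.resolve_right ?_, fun h => ⟨hij.ne, .inl h⟩⟩
  rintro ⟨hj, hji⟩
  have := (hL j hj).1
  rw [Fin.lt_def] at hij
  omega

lemma atMostOneLargerNeighbor_parentGraph (hL : IsParentList L) :
    (parentGraph m L).AtMostOneLargerNeighbor := by
  intro i j j' h h' hij hij'
  rw [parentGraph_adj_of_lt hL hij] at h
  rw [parentGraph_adj_of_lt hL hij'] at h'
  exact Fin.ext (h.2.symm.trans h'.2)

lemma noncrossing_parentGraph (hL : IsParentList L) : Noncrossing (parentGraph m L) := by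
  intro a b c d hab hbc hcd hac hbd
  rw [parentGraph_adj_of_lt hL (hab.trans hbc)] at hac
  rw [parentGraph_adj_of_lt hL (hbc.trans hcd)] at hbd
  rw [Fin.lt_def] at hab hbc hcd
  have := (hL a hac.1).2.2 b hab (by omega)
  omega

lemma reachable_last_parentGraph (hL : IsParentList L) (hm : L.length = m) (i : Fin (m + 1)) :
    (parentGraph m L).Reachable i (Fin.last m) := by
  induction hk : m - (i : ℕ) using Nat.strong_induction_on generalizing i with
  | _ k ih =>
  rcases (Fin.le_last i).lt_or_eq with hi | rfl
  · have hi' : (i : ℕ) < L.length := by rw [Fin.lt_def, Fin.val_last] at hi; omega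
    obtain ⟨h₁, h₂, -⟩ := hL i hi'
    let j : Fin (m + 1) := ⟨L.getD i 0, by omega⟩
    have hadj : (parentGraph m L).Adj i j :=
      (parentGraph_adj_of_lt hL (Fin.lt_def.mpr h₁)).mpr ⟨hi', rfl⟩
    exact hadj.reachable.trans (ih (m - L.getD i 0) (by omega) j rfl)
  · rfl

lemma isTree_parentGraph (hL : IsParentList L) (hm : L.length = m) : (parentGraph m L).IsTree :=
  (atMostOneLargerNeighbor_parentGraph hL).isTree_of_connected
    { preconnected := fun i j =>
        (reachable_last_parentGraph hL hm i).trans (reachable_last_parentGraph hL hm j).symm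
      nonempty := ⟨0⟩ }

lemma eq_of_parentGraph_eq {L' : List ℕ} (hL : IsParentList L) (hL' : IsParentList L')
    (hm : L.length = m) (hm' : L'.length = m) (h : parentGraph m L = parentGraph m L') :
    L = L' := by
  refine List.ext_getElem (hm.trans hm'.symm) fun i hi hi' => ?_
  obtain ⟨h₁, h₂, -⟩ := hL i hi
  have hadj : (parentGraph m L').Adj ⟨i, by omega⟩ ⟨L.getD i 0, by omega⟩ :=
    h ▸ (parentGraph_adj_of_lt hL (Fin.lt_def.mpr h₁)).mpr ⟨hi, rfl⟩
  have : L'.getD i 0 = L.getD i 0 := ((parentGraph_adj_of_lt hL' (Fin.lt_def.mpr h₁)).mp hadj).2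
  rwa [List.getD_eq_getElem _ _ hi, List.getD_eq_getElem _ _ hi', eq_comm] at this

lemma exists_parentGraph_eq {T : SimpleGraph (Fin (m + 1))} (hT : T.IsTree) (hNC : Noncrossing T)
    (hU : T.AtMostOneLargerNeighbor) :
    ∃ L, IsParentList L ∧ L.length = m ∧ parentGraph m L = T := by
  choose q hq using fun k : Fin m => hT.exists_adj_gt hU ⟨Fin.last m, k.castSucc_lt_last⟩
  let L := List.ofFn fun k => (q k : ℕ)
  have hLm : L.length = m := List.length_ofFn
  have hLq : ∀ k : Fin m, L.getD k 0 = q k := fun k => by simp [L]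
  have hadj : ∀ (k : Fin m) (j : Fin (m + 1)), k.castSucc < j → (T.Adj k.castSucc j ↔ q k = j) :=
    fun k j hkj => ⟨fun h => hU _ _ _ (hq k).1 h (hq k).2 hkj, fun h => h ▸ (hq k).1⟩
  have hL : IsParentList L := by
    intro i hi
    rw [hLm] at hi
    rw [hLm, hLq ⟨i, hi⟩]
    have hlt : i < q ⟨i, hi⟩ := (hq ⟨i, hi⟩).2
    refine ⟨hlt, (q _).is_le, fun j hij hjq => ?_⟩
    have hj : j < m := by have := (q ⟨i, hi⟩).is_le; omega
    rw [hLq ⟨j, hj⟩]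
    by_contra! hcross
    exact hNC _ _ _ _ (Fin.lt_def.mpr hij) (Fin.lt_def.mpr hjq) (Fin.lt_def.mpr hcross)
      (hq ⟨i, hi⟩).1 (hq ⟨j, hj⟩).1
  refine ⟨L, hL, hLm, SimpleGraph.ext_of_adj_iff_of_lt fun i j hij => ?_⟩
  have hi : (i : ℕ) < m := by have := j.is_le; rw [Fin.lt_def] at hij; omega
  obtain ⟨k, rfl⟩ : ∃ k : Fin m, k.castSucc = i := ⟨⟨i, hi⟩, rfl⟩
  rw [parentGraph_adj_of_lt hL hij, hadj k j hij, Fin.val_castSucc, hLq, hLm, Fin.val_inj]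
  exact and_iff_right k.isLt

end parentGraph

lemma card_noncrossingTrees (m : ℕ) :
    Nat.card {T : SimpleGraph (Fin (m + 1)) //
      T.IsTree ∧ Noncrossing T ∧ T.AtMostOneLargerNeighbor} = catalan m := by
  rw [← card_parentLists m]
  refine (Nat.card_eq_of_bijective (fun L => ⟨parentGraph m L.1, isTree_parentGraph L.2.1 L.2.2,
    noncrossing_parentGraph L.2.1, atMostOneLargerNeighbor_parentGraph L.2.1⟩) ⟨?_, ?_⟩).symm
  · rintro ⟨L, hL, hm⟩ ⟨L', hL', hm'⟩ h
    exact Subtype.ext (eq_of_parentGraph_eq hL hL' hm hm' (congrArg Subtype.val h))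
  · rintro ⟨T, hT, hNC, hU⟩
    obtain ⟨L, hL, hm, rfl⟩ := exists_parentGraph_eq hT hNC hU
    exact ⟨⟨L, hL, hm⟩, rfl⟩

/-- The number of noncrossing trees on `[n]` in which every vertex has at most one
larger neighbor is the Catalan number `C_{n-1} = (1/n) * binomial (2n-2) (n-1)`. -/
theorem card_noncrossing_trees_at_most_one_larger_neighbor (n : ℕ) (hn : 1 ≤ n) :
    Nat.card {T : SimpleGraph (Fin n) //
        T.IsTree ∧ Noncrossing T ∧
        ∀ i j j' : Fin n, T.Adj i j → T.Adj i j' → i < j → i < j' → j = j'} =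
      catalan (n - 1) ∧
    catalan (n - 1) = (2 * n - 2).choose (n - 1) / n := by
  obtain ⟨m, rfl⟩ := Nat.exists_eq_add_of_le' hn
  refine ⟨card_noncrossingTrees m, ?_⟩
  rw [Nat.add_sub_cancel, show 2 * (m + 1) - 2 = 2 * m by omega, catalan_eq_centralBinom_div,
    Nat.centralBinom]
end

section
/- Let T be a noncrossing tree on [n] with n ≥ 2. Then s_n(T) = 1, where s(T) is the signature of T. More generally, s_i(T) = 1 if and only if the vertices on the unique path in T from 1 to i appear in increasing order. -/
attribute [local instance] Classical.propDecidable

/-- The signature of a noncrossing tree on `Fin n` (vertices `0, 1, ..., n-1`):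
`s 0 = 1`; and for `i > 0`, `s i = s j` where `j < i` is minimal with `{j,i}` an edge,
if such a `j` exists, and otherwise `s i = s (i-1) + 1`. -/
noncomputable def signature {n : ℕ} (T : SimpleGraph (Fin n)) : ℕ → ℕ
  | 0 => 1
  | (i+1) =>
    if h : ∃ j, j ≤ i ∧ ∃ (h1 : j < n) (h2 : i + 1 < n), T.Adj ⟨j, h1⟩ ⟨i + 1, h2⟩ then
      signature T (@Nat.find _ (fun _ => @instDecidableAnd _ _ (Classical.propDecidable _)
        (@exists_prop_decidable _ _ (Classical.propDecidable _) fun _ =>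
          @exists_prop_decidable _ _ (Classical.propDecidable _) fun _ => Classical.propDecidable _)) h)
    else
      signature T i + 1
termination_by i => i
decreasing_by
  · exact Nat.lt_succ_of_le (by convert (Nat.find_spec h).1)
  · exact Nat.lt_succ_self i

/-!
Call a walk increasing if its vertices increase along it. The crux is a crossing argument: if `p`
is an increasing walk from `a` to `b` and `c — d` is an edge with `a ≤ c ≤ b < d`, then `c` lies
on `p`, since an edge of `p` jumping over `c` would cross `c — d`. An increasing walk from `0` to
`v ≠ 0` ends with an edge `k — v`, `k < v`, and the minimal lower neighbour `j ≤ k` of `v` then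
lies on its increasing part up to `k`. So, by strong induction on `v`, `s v = 1` exactly when
some increasing walk leads from `0` to `v`; in a tree this walk is the path. Finally, if `M < n - 1`
were the largest vertex so reachable, connectivity would give an edge `c — d` with `c ≤ M < d`,
and the crossing argument would extend the walk to `M` increasingly to `d`.
-/

namespace SimpleGraph.Walk

variable {V : Type*} {G : SimpleGraph V} {u v w : V}

theorem exists_eq_concat_of_ne (hne : u ≠ v) (p : G.Walk u v) :
    ∃ (x : V) (q : G.Walk u x) (h : G.Adj x v), p = q.concat h := by
  obtain ⟨x, h, p', rfl⟩ := exists_eq_cons_of_ne hne p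
  exact exists_cons_eq_concat h p'

variable [LinearOrder V]

def IsIncreasing (p : G.Walk u v) : Prop := p.support.IsChain (· < ·)

theorem isIncreasing_nil : (nil : G.Walk u u).IsIncreasing := List.isChain_singleton u

theorem isIncreasing_cons_iff {h : G.Adj u v} {p : G.Walk v w} :
    (cons h p).IsIncreasing ↔ u < v ∧ p.IsIncreasing := by
  rw [IsIncreasing, IsIncreasing, support_cons, ← p.cons_tail_support, List.isChain_cons_cons]

theorem isIncreasing_concat_iff {p : G.Walk u v} {h : G.Adj v w} :
    (p.concat h).IsIncreasing ↔ p.IsIncreasing ∧ v < w := by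
  have hlast : p.support.getLast? = some v := by
    rw [List.getLast?_eq_some_getLast p.support_ne_nil, p.getLast_support]
  simp [IsIncreasing, List.isChain_append, hlast]

theorem IsIncreasing.start_le {p : G.Walk u v} (hp : p.IsIncreasing) : u ≤ v := by
  induction p with
  | nil => rfl
  | cons _ q ih =>
    obtain ⟨huv, hq⟩ := isIncreasing_cons_iff.1 hp
    exact huv.le.trans (ih hq)

theorem IsIncreasing.takeUntil [DecidableEq V] {p : G.Walk u v} (hp : p.IsIncreasing)
    (hw : w ∈ p.support) : (p.takeUntil w hw).IsIncreasing := by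
  refine List.IsChain.prefix hp ⟨(p.dropUntil w hw).support.tail, ?_⟩
  rw [← support_append, take_spec]

theorem IsIncreasing.isPath {p : G.Walk u v} (hp : p.IsIncreasing) : p.IsPath :=
  IsPath.mk' (List.isChain_iff_pairwise.1 hp).nodup

end SimpleGraph.Walk

open SimpleGraph Walk

variable {n : ℕ} {T : SimpleGraph (Fin n)}

theorem Noncrossing.mem_support_of_adj (hnc : Noncrossing T) {a b c d : Fin n}
    (p : T.Walk a b) (hp : p.IsIncreasing) (hac : a ≤ c) (hcb : c ≤ b) (hcd : T.Adj c d)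
    (hbd : b < d) : c ∈ p.support := by
  induction p with
  | nil => simp [le_antisymm hcb hac]
  | @cons x y b hxy q ih =>
    obtain ⟨hxy', hq⟩ := isIncreasing_cons_iff.1 hp
    rcases hac.eq_or_lt with rfl | hxc
    · exact start_mem_support _
    rcases le_or_gt y c with hyc | hcy
    · exact List.mem_cons_of_mem _ (ih hq hyc hcb hbd)
    · exact (hnc x c y d hxc hcy (hq.start_le.trans_lt hbd) hxy hcd).elim

theorem signature_succ_of_exists {i : ℕ}
    (h : ∃ j, j ≤ i ∧ ∃ (h1 : j < n) (h2 : i + 1 < n), T.Adj ⟨j, h1⟩ ⟨i + 1, h2⟩) :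
    signature T (i + 1) = signature T (Nat.find h) := by
  rw [signature, dif_pos h]
  -- `signature` was defined with classical decidability instances for its `Nat.find`
  congr

theorem signature_pos (T : SimpleGraph (Fin n)) (i : ℕ) : 0 < signature T i := by
  induction i using Nat.strong_induction_on with
  | _ i ih =>
    match i with
    | 0 => rw [signature]; exact one_pos
    | j + 1 =>
      by_cases h : ∃ k, k ≤ j ∧ ∃ (h1 : k < n) (h2 : j + 1 < n), T.Adj ⟨k, h1⟩ ⟨j + 1, h2⟩
      · rw [signature_succ_of_exists h]
        exact ih _ (Nat.lt_succ_of_le (Nat.find_spec h).1)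
      · rw [signature, dif_neg h]
        exact Nat.succ_pos _

theorem signature_eq_of_min_adj {u v : Fin n} (huv : u < v) (hadj : T.Adj u v)
    (hmin : ∀ w < u, ¬T.Adj w v) : signature T v = signature T u := by
  obtain ⟨_ | i, hv⟩ := v
  · exact (Nat.not_lt_zero _ huv).elim
  have h : ∃ j, j ≤ i ∧ ∃ (h1 : j < n) (h2 : i + 1 < n), T.Adj ⟨j, h1⟩ ⟨i + 1, h2⟩ :=
    ⟨u, Nat.lt_succ_iff.1 huv, u.isLt, hv, hadj⟩
  rw [signature_succ_of_exists h]
  congr 1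
  rw [Nat.find_eq_iff]
  refine ⟨⟨Nat.lt_succ_iff.1 huv, u.isLt, hv, hadj⟩, fun j hj ⟨_, hjn, _, hadj'⟩ => ?_⟩
  exact hmin ⟨j, hjn⟩ hj hadj'

theorem one_lt_signature_of_forall_not_adj {v : Fin n} (hv : v.val ≠ 0)
    (h : ∀ u < v, ¬T.Adj u v) : 1 < signature T v := by
  obtain ⟨_ | i, hv⟩ := v
  · exact absurd rfl hv
  rw [signature, dif_neg]
  · exact Nat.succ_lt_succ (signature_pos T i)
  · rintro ⟨j, hj, hjn, _, hadj⟩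
    exact h ⟨j, hjn⟩ (Nat.lt_succ_of_le hj) hadj

theorem Noncrossing.signature_eq_one_iff (hnc : Noncrossing T) (h0 : 0 < n) (v : Fin n) :
    signature T v = 1 ↔ ∃ p : T.Walk ⟨0, h0⟩ v, p.IsIncreasing := by
  induction v using WellFoundedLT.induction with
  | _ v ih =>
  by_cases hv0 : v.val = 0
  · obtain rfl : v = ⟨0, h0⟩ := Fin.ext hv0
    exact iff_of_true (by rw [signature]) ⟨nil, isIncreasing_nil⟩
  have hne : (⟨0, h0⟩ : Fin n) ≠ v := fun h => hv0 (congrArg Fin.val h).symm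
  by_cases hlow : ∃ u < v, T.Adj u v
  · obtain ⟨u, ⟨huv, hadj⟩, hmin⟩ :=
      WellFounded.has_min wellFounded_lt {u | u < v ∧ T.Adj u v} hlow
    rw [signature_eq_of_min_adj huv hadj (fun w hw h => hmin w ⟨hw.trans huv, h⟩ hw), ih u huv]
    constructor
    · rintro ⟨p, hp⟩
      exact ⟨p.concat hadj, isIncreasing_concat_iff.2 ⟨hp, huv⟩⟩
    · rintro ⟨q, hq⟩
      obtain ⟨k, r, hkv, rfl⟩ := exists_eq_concat_of_ne hne q
      obtain ⟨hr, hkv'⟩ := isIncreasing_concat_iff.1 hq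
      have huk : u ≤ k := not_lt.1 fun hku => hmin k ⟨hkv', hkv⟩ hku
      have hur : u ∈ r.support :=
        hnc.mem_support_of_adj r hr (Fin.le_def.2 (Nat.zero_le _)) huk hadj hkv'
      exact ⟨_, hr.takeUntil hur⟩
  · push Not at hlow
    refine iff_of_false (one_lt_signature_of_forall_not_adj hv0 hlow).ne' ?_
    rintro ⟨q, hq⟩
    obtain ⟨k, r, hkv, rfl⟩ := exists_eq_concat_of_ne hne q
    exact hlow k (isIncreasing_concat_iff.1 hq).2 hkv

theorem Noncrossing.exists_isIncreasing_walk_to_last (hnc : Noncrossing T) (hconn : T.Connected)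
    (h0 : 0 < n) : ∃ p : T.Walk ⟨0, h0⟩ ⟨n - 1, Nat.sub_one_lt_of_lt h0⟩, p.IsIncreasing := by
  let S := Finset.univ.filter fun v => ∃ p : T.Walk ⟨0, h0⟩ v, p.IsIncreasing
  have h0S : ⟨0, h0⟩ ∈ S := Finset.mem_filter.2 ⟨Finset.mem_univ _, nil, isIncreasing_nil⟩
  set M := S.max' ⟨_, h0S⟩
  obtain ⟨pM, hpM⟩ := (Finset.mem_filter.1 (S.max'_mem ⟨_, h0S⟩)).2
  suffices hM : M = ⟨n - 1, Nat.sub_one_lt_of_lt h0⟩ from hM ▸ ⟨pM, hpM⟩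
  refine le_antisymm (Fin.le_def.2 (Nat.le_sub_one_of_lt M.isLt)) (not_lt.1 fun hlt => ?_)
  obtain ⟨e, -, hc, hd⟩ := (hconn.preconnected ⟨0, h0⟩ ⟨n - 1, _⟩).some.exists_boundary_dart
    {x | x ≤ M} (Fin.le_def.2 (Nat.zero_le _)) (not_le.2 hlt)
  have hMd : M < e.snd := lt_of_not_ge hd
  have hcM := hnc.mem_support_of_adj pM hpM (Fin.le_def.2 (Nat.zero_le _)) hc e.adj hMd
  have hdS : e.snd ∈ S := Finset.mem_filter.2 ⟨Finset.mem_univ _, (pM.takeUntil _ hcM).concat e.adj,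
    isIncreasing_concat_iff.2 ⟨hpM.takeUntil hcM, lt_of_le_of_lt hc hMd⟩⟩
  exact hd (S.le_max' _ hdS)

/-- For a noncrossing tree `T` on `[n]` (`n ≥ 2`), the last entry of the signature is `1`;
more generally, `s i = 1` iff the unique path in `T` from the first vertex to `i`
visits its vertices in increasing order. -/
theorem signature_eq_one_iff_path_increasing {n : ℕ} (hn : 2 ≤ n)
    (T : SimpleGraph (Fin n)) (hT : T.IsTree) (hnc : Noncrossing T) :
    signature T (n - 1) = 1 ∧
    ∀ (i : Fin n) (p : T.Walk ⟨0, by omega⟩ i), p.IsPath →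
      (signature T i.val = 1 ↔ List.Chain' (· < ·) p.support) := by
  have h0 : 0 < n := by omega
  refine ⟨(hnc.signature_eq_one_iff h0 _).2 (hnc.exists_isIncreasing_walk_to_last hT.connected h0),
    fun i p hp => (hnc.signature_eq_one_iff h0 i).trans ⟨?_, fun hinc => ⟨p, hinc⟩⟩⟩
  rintro ⟨q, hq⟩
  have hpq : p = q :=
    congrArg Subtype.val ((hT.isAcyclic.subsingleton_path _ _).elim ⟨p, hp⟩ ⟨q, hq.isPath⟩)
  rwa [hpq]
end

section
/- Let T be a noncrossing tree on [n] containing the edge {i,k} with i < k. Let p be maximal with i ≤ p < k such that the path from p to i in T does not contain k. Then every vertex j with i ≤ j ≤ p is closer to i than to k (the path from j to i avoids k), and every vertex j with p+1 ≤ j ≤ k is closer to k than to i (the path from j to k avoids i). -/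
/-- In a tree `T`, vertex `x` is closer to `y` than to `z` if the unique path in `T`
from `x` to `y` does not pass through `z`. -/
def CloserTo {n : ℕ} (T : SimpleGraph (Fin n)) (x y z : Fin n) : Prop :=
  ∃ p : T.Walk x y, p.IsPath ∧ z ∉ p.support

open SimpleGraph Walk

/-- number of darts of `P` whose arc strictly covers `x`. -/
def crossN {n : ℕ} {T : SimpleGraph (Fin n)} {a b : Fin n} (P : T.Walk a b) (x : Fin n) : ℕ :=
  (P.darts.filter (fun e => decide ((e.toProd.1.val < x.val ∧ x.val < e.toProd.2.val) ∨
    (e.toProd.2.val < x.val ∧ x.val < e.toProd.1.val)))).length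

lemma crossN_parity {n : ℕ} {T : SimpleGraph (Fin n)} {a b : Fin n} (x : Fin n)
    (P : T.Walk a b) (hx : x ∉ P.support) :
    crossN P x % 2 = if (x.val < a.val ↔ x.val < b.val) then 0 else 1 := by
  induction P with
  | nil => simp [crossN]
  | @cons u v w h q ih =>
    rw [support_cons] at hx
    have hxu : x.val ≠ u.val := fun e => hx (by simp [Fin.ext e])
    have hxq : x ∉ q.support := fun hm => hx (List.mem_cons_of_mem _ hm)
    have hxv : x.val ≠ v.val := fun e => hxq ((Fin.ext e : x = v) ▸ q.start_mem_support)
    have ihq := ih hxq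
    rw [crossN, darts_cons, List.filter_cons]
    rw [crossN] at ihq
    by_cases hc : (u.val < x.val ∧ x.val < v.val) ∨ (v.val < x.val ∧ x.val < u.val)
    · rw [if_pos (by simpa using hc), List.length_cons]
      split_ifs at ihq ⊢ <;> omega
    · rw [if_neg (by simpa using hc)]
      split_ifs at ihq ⊢ <;> omega

lemma cross_step {n : ℕ} {T : SimpleGraph (Fin n)} (hnc : Noncrossing T) {u w c c' : Fin n}
    (huw : T.Adj u w) (hcc' : T.Adj c c')
    (hcu : c.val ≠ u.val) (hcw : c.val ≠ w.val)
    (hcu' : c'.val ≠ u.val) (hcw' : c'.val ≠ w.val)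
    (h : (u.val < c.val ∧ c.val < w.val) ∨ (w.val < c.val ∧ c.val < u.val)) :
    (u.val < c'.val ∧ c'.val < w.val) ∨ (w.val < c'.val ∧ c'.val < u.val) := by
  by_contra hn
  push_neg at hn
  have hne : c.val ≠ c'.val := fun e => hcc'.ne (Fin.ext e)
  -- set m, M be min and max of u, w
  rcases h with ⟨h1, h2⟩ | ⟨h1, h2⟩
  · -- u < c < w
    have hout : c'.val < u.val ∨ w.val < c'.val := by
      rcases hn with ⟨hn1, hn2⟩; omega
    rcases hout with ho | ho
    · exact hnc c' u c w (Fin.lt_def.mpr (by omega)) (Fin.lt_def.mpr (by omega))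
        (Fin.lt_def.mpr (by omega)) hcc'.symm huw
    · exact hnc u c w c' (Fin.lt_def.mpr (by omega)) (Fin.lt_def.mpr (by omega))
        (Fin.lt_def.mpr (by omega)) huw hcc'
  · -- w < c < u
    have hout : c'.val < w.val ∨ u.val < c'.val := by
      rcases hn with ⟨hn1, hn2⟩; omega
    rcases hout with ho | ho
    · exact hnc c' w c u (Fin.lt_def.mpr (by omega)) (Fin.lt_def.mpr (by omega))
        (Fin.lt_def.mpr (by omega)) hcc'.symm huw.symm
    · exact hnc w c u c' (Fin.lt_def.mpr (by omega)) (Fin.lt_def.mpr (by omega))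
        (Fin.lt_def.mpr (by omega)) huw.symm hcc'

lemma crossN_dart_eq {n : ℕ} {T : SimpleGraph (Fin n)} (hnc : Noncrossing T)
    {a b c c' : Fin n} (P : T.Walk a b) (hcc' : T.Adj c c')
    (hc : c ∉ P.support) (hc' : c' ∉ P.support) :
    crossN P c = crossN P c' := by
  unfold crossN
  congr 1
  apply List.filter_congr
  intro e he
  have hadj : T.Adj e.toProd.1 e.toProd.2 := e.adj
  have h1 : e.toProd.1 ∈ P.support := P.dart_fst_mem_support_of_mem_darts he
  have h2 : e.toProd.2 ∈ P.support := P.dart_snd_mem_support_of_mem_darts he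
  have hcu : c.val ≠ e.toProd.1.val := fun h => hc (Fin.ext h ▸ h1)
  have hcw : c.val ≠ e.toProd.2.val := fun h => hc (Fin.ext h ▸ h2)
  have hcu' : c'.val ≠ e.toProd.1.val := fun h => hc' (Fin.ext h ▸ h1)
  have hcw' : c'.val ≠ e.toProd.2.val := fun h => hc' (Fin.ext h ▸ h2)
  rw [decide_eq_decide]
  constructor
  · intro h
    have := cross_step hnc hadj hcc' (by omega) (by omega) (by omega) (by omega)
      (by omega)
    omega
  · intro h
    have := cross_step hnc hadj hcc'.symm (by omega) (by omega) (by omega) (by omega)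
      (by omega)
    omega

lemma crossN_walk_eq {n : ℕ} {T : SimpleGraph (Fin n)} (hnc : Noncrossing T)
    {a b c d : Fin n} (P : T.Walk a b) (Q : T.Walk c d)
    (hdisj : ∀ v ∈ Q.support, v ∉ P.support) :
    crossN P c = crossN P d := by
  induction Q with
  | nil => rfl
  | @cons u v w h q ih =>
    have h1 : u ∉ P.support := hdisj u (by simp [support_cons])
    have h2 : v ∉ P.support := hdisj v (by simp [support_cons])
    exact (crossN_dart_eq hnc P h h1 h2).trans
      (ih fun x hx => hdisj x (by simp [support_cons, hx]))

/-- existence part of the dichotomy -/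
lemma closer_dichotomy {n : ℕ} {T : SimpleGraph (Fin n)} (hT : T.IsTree)
    (i k j : Fin n) (hik : i ≠ k) : CloserTo T j i k ∨ CloserTo T j k i := by
  obtain ⟨w⟩ := hT.isConnected.preconnected j i
  set P := w.bypass with hPdef
  have hP : P.IsPath := w.bypass_isPath
  by_cases hk : k ∈ P.support
  · right
    refine ⟨P.takeUntil k hk, hP.takeUntil hk, ?_⟩
    intro hi
    have hspec := P.take_spec hk
    have hnd : P.support.Nodup := hP.support_nodup
    have hsupp : (P.takeUntil k hk).support ++ (P.dropUntil k hk).support.tail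
        = P.support := by rw [← support_append, hspec]
    have hi2 : i ∈ (P.dropUntil k hk).support.tail := by
      have h3 : i ∈ (P.dropUntil k hk).support := end_mem_support _
      have h4 := support_eq_cons (P.dropUntil k hk)
      rw [h4, List.mem_cons] at h3
      rcases h3 with h3 | h3
      · exact absurd h3 hik
      · exact h3
    rw [← hsupp] at hnd
    exact (List.disjoint_of_nodup_append hnd) hi hi2
  · exact Or.inl ⟨P, hP, hk⟩

/-- exclusivity part of the dichotomy -/
lemma closer_not_both {n : ℕ} {T : SimpleGraph (Fin n)} (hT : T.IsTree)
    {i k : Fin n} (hadj : T.Adj i k) (j : Fin n)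
    (h1 : CloserTo T j i k) (h2 : CloserTo T j k i) : False := by
  obtain ⟨P1, hP1, hk1⟩ := h1
  obtain ⟨P2, hP2, hi2⟩ := h2
  by_cases hji : j = i
  · subst hji; exact hi2 P2.start_mem_support
  -- build a path from j to k through i
  have hi1 : i ∈ P1.reverse.support := by
    rw [support_reverse]; exact List.mem_reverse.mpr P1.end_mem_support
  have hk1' : k ∉ P1.reverse.support := by
    rw [support_reverse]; exact fun h => hk1 (List.mem_reverse.mp h)
  have hP3 : (Walk.cons hadj.symm P1.reverse).IsPath := by
    rw [cons_isPath_iff]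
    exact ⟨hP1.reverse, hk1'⟩
  have hP3' : (Walk.cons hadj.symm P1.reverse).reverse.IsPath := hP3.reverse
  have huniq := hT.IsAcyclic.path_unique
    ⟨(Walk.cons hadj.symm P1.reverse).reverse, hP3'⟩ ⟨P2, hP2⟩
  have hweq : (Walk.cons hadj.symm P1.reverse).reverse = P2 := congrArg Subtype.val huniq
  have : i ∈ P2.support := by
    rw [← hweq, support_reverse, List.mem_reverse, support_cons]
    exact List.mem_cons_of_mem _ hi1
  exact hi2 this

/-- Let `T` be a noncrossing tree containing the edge `{i,k}` with `i < k`, and let `p` be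
maximal with `i ≤ p < k` such that the path from `p` to `i` avoids `k`. Then every vertex
`j` with `i ≤ j ≤ p` is closer to `i` than to `k`, and every vertex `j` with
`p + 1 ≤ j ≤ k` is closer to `k` than to `i`. -/
theorem noncrossing_tree_split_at_edge {n : ℕ} (T : SimpleGraph (Fin n))
    (hT : T.IsTree) (hnc : Noncrossing T) (i k : Fin n) (hik : i < k)
    (hadj : T.Adj i k) (p : Fin n)
    (hp1 : i ≤ p) (hp2 : p < k) (hp3 : CloserTo T p i k)
    (hpmax : ∀ q : Fin n, i ≤ q → q < k → CloserTo T q i k → q ≤ p) :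
    (∀ j : Fin n, i ≤ j → j ≤ p → CloserTo T j i k) ∧
    (∀ j : Fin n, p.val + 1 ≤ j.val → j ≤ k → CloserTo T j k i) := by
  have hikne : i ≠ k := hik.ne
  constructor
  · intro j hj1 hj2
    by_cases hji : j = i
    · subst hji
      exact ⟨Walk.nil, IsPath.nil, by simp [hikne.symm]⟩
    by_cases hjp : j = p
    · subst hjp; exact hp3
    rcases closer_dichotomy hT i k j hikne with h | h
    · exact h
    exfalso
    obtain ⟨Q, hQ, hiQ⟩ := h
    obtain ⟨P, hP, hkP⟩ := hp3
    -- P and Q have disjoint supports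
    have hdisj : ∀ v ∈ Q.support, v ∉ P.support := by
      intro v hvQ hvP
      have c1 : CloserTo T v i k :=
        ⟨P.dropUntil v hvP, hP.dropUntil hvP,
          fun h => hkP (P.support_dropUntil_subset hvP h)⟩
      have c2 : CloserTo T v k i :=
        ⟨Q.dropUntil v hvQ, hQ.dropUntil hvQ,
          fun h => hiQ (Q.support_dropUntil_subset hvQ h)⟩
      exact closer_not_both hT hadj v c1 c2
    have heq : crossN P j = crossN P k := crossN_walk_eq hnc P Q hdisj
    have hjP : j ∉ P.support := hdisj j Q.start_mem_support
    have par1 := crossN_parity j P hjP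
    have par2 := crossN_parity k P hkP
    -- values
    have v1 : i.val < j.val := lt_of_le_of_ne (Fin.le_def.mp hj1) (fun e => hji (Fin.ext e.symm))
    have v2 : j.val < p.val := lt_of_le_of_ne (Fin.le_def.mp hj2) (fun e => hjp (Fin.ext e))
    have v3 : p.val < k.val := Fin.lt_def.mp hp2
    rw [if_neg (by omega)] at par1
    rw [if_pos (by omega)] at par2
    omega
  · intro j hj1 hj2
    by_cases hjk : j = k
    · subst hjk
      exact ⟨Walk.nil, IsPath.nil, by simp [hikne]⟩
    have hjk' : j < k := lt_of_le_of_ne hj2 hjk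
    have hij : i ≤ j := le_trans hp1 (Fin.le_def.mpr (by omega))
    rcases closer_dichotomy hT i k j hikne with h | h
    · exfalso
      have := hpmax j hij hjk' h
      have := Fin.le_def.mp this
      omega
    · exact h
end

section
/- If {i,k} is an edge of a noncrossing tree T on [n] with i < k, then the induced subgraph of T on the vertex set {i, i+1, ..., k} is itself a (connected) noncrossing tree. -/
/-- If `{i,k}` with `i < k` is an edge of a noncrossing tree `T` on `[n]`, then the
induced subgraph of `T` on the vertices `{i, i+1, ..., k}` is itself a (connected)
noncrossing tree. -/
theorem induced_subgraph_of_noncrossing_tree_is_tree {n : ℕ} (T : SimpleGraph (Fin n))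
    (hT : T.IsTree) (hnc : Noncrossing T) (i k : Fin n) (hik : i < k) (hadj : T.Adj i k) :
    (T.induce {v : Fin n | i ≤ v ∧ v ≤ k}).IsTree ∧
    (∀ a b c d : {v : Fin n | i ≤ v ∧ v ≤ k},
      (a : Fin n) < b → (b : Fin n) < c → (c : Fin n) < d →
      (T.induce {v : Fin n | i ≤ v ∧ v ≤ k}).Adj a c →
      (T.induce {v : Fin n | i ≤ v ∧ v ≤ k}).Adj b d → False) := by
  set S : Set (Fin n) := {v : Fin n | i ≤ v ∧ v ≤ k} with hS
  have hiS : i ∈ S := ⟨le_refl i, hik.le⟩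
  have hkS : k ∈ S := ⟨hik.le, le_refl k⟩
  have adj_ik : (T.induce S).Adj ⟨k, hkS⟩ ⟨i, hiS⟩ := by
    simp [SimpleGraph.induce, hadj.symm]
  have key : ∀ (v j : Fin n) (W : T.Walk v j), i = j → W.IsPath → ∀ hv : v ∈ S,
      (T.induce S).Reachable ⟨v, hv⟩ ⟨i, hiS⟩ := by
    intro v j W
    induction W with
    | nil =>
      rintro rfl _ _; exact SimpleGraph.Reachable.refl _
    | @cons u w j h W ih =>
      intro heq hP hv
      subst heq
      rw [SimpleGraph.Walk.cons_isPath_iff] at hP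
      have hui : u ≠ i := fun e => hP.2 (e ▸ SimpleGraph.Walk.end_mem_support W)
      by_cases hwS : w ∈ S
      · have hadj' : (T.induce S).Adj ⟨u, hv⟩ ⟨w, hwS⟩ := by
          simp [SimpleGraph.induce, h]
        exact (hadj'.reachable).trans (ih rfl hP.1 hwS)
      · by_cases huk : u = k
        · subst huk
          exact adj_ik.reachable
        · have hiu : i < u := lt_of_le_of_ne hv.1 (Ne.symm hui)
          have huk' : u < k := lt_of_le_of_ne hv.2 huk
          rcases lt_or_ge w i with hwi | hiw
          · exact absurd (hnc w i u k hwi hiu huk' h.symm hadj) id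
          · have hkw : k < w := by
              by_contra hc
              exact hwS ⟨hiw, not_lt.mp hc⟩
            exact absurd (hnc i u k w hiu huk' hkw hadj h) id
  have reach : ∀ x : S, (T.induce S).Reachable x ⟨i, hiS⟩ := by
    rintro ⟨v, hv⟩
    obtain ⟨W⟩ := hT.isConnected.preconnected v i
    exact key v i W.bypass rfl W.bypass_isPath hv
  have hconn : (T.induce S).Connected := by
    haveI : Nonempty S := ⟨⟨i, hiS⟩⟩
    exact ⟨fun a b => (reach a).trans (reach b).symm⟩
  have hac : (T.induce S).IsAcyclic := by
    intro v c hc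
    exact hT.IsAcyclic _ ((SimpleGraph.Walk.map_isCycle_iff_of_injective
      (f := (SimpleGraph.Embedding.induce (G := T) S).toHom)
      (SimpleGraph.Embedding.induce (G := T) S).injective).mpr hc)
  refine ⟨⟨hconn, hac⟩, ?_⟩
  intro a b c d hab hbc hcd h1 h2
  have h1' : T.Adj a c := h1
  have h2' : T.Adj b d := h2
  exact hnc a b c d hab hbc hcd h1' h2'
end

section
/- In the free associative algebra over ℚ on generators x_{ij} = −x_{ji} (1 ≤ i < j ≤ n) modulo the Fomin–Kirillov relations (x_{ij}² = 0; x_{ij}x_{kl} = x_{kl}x_{ij} for distinct i,j,k,l; x_{ij}x_{jk} + x_{jk}x_{ki} + x_{ki}x_{ij} = 0 for distinct i,j,k), the following cyclic relation holds for any distinct i_1,...,i_m: x_{i_1i_2}x_{i_2i_3}···x_{i_{m−1}i_m} + x_{i_2i_3}x_{i_3i_4}···x_{i_{m−1}i_m}x_{i_mi_1} + ··· + x_{i_mi_1}x_{i_1i_2}···x_{i_{m−2}i_{m−1}} = 0. -/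
/-- The defining relations of the Fomin–Kirillov algebra `E_n`:
`x_{ij} = -x_{ji}`; `x_{ij}² = 0`; `x_{ij}x_{kl} = x_{kl}x_{ij}` for distinct `i,j,k,l`;
and `x_{ij}x_{jk} + x_{jk}x_{ki} + x_{ki}x_{ij} = 0` for distinct `i,j,k`. -/
inductive FKRel (n : ℕ) :
    FreeAlgebra ℚ (Fin n × Fin n) → FreeAlgebra ℚ (Fin n × Fin n) → Prop
  | antisymm (i j : Fin n) : i ≠ j →
      FKRel n (FreeAlgebra.ι ℚ (i, j)) (-(FreeAlgebra.ι ℚ (j, i)))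
  | sq (i j : Fin n) : i ≠ j →
      FKRel n (FreeAlgebra.ι ℚ (i, j) * FreeAlgebra.ι ℚ (i, j)) 0
  | comm (i j k l : Fin n) : i ≠ j → i ≠ k → i ≠ l → j ≠ k → j ≠ l → k ≠ l →
      FKRel n (FreeAlgebra.ι ℚ (i, j) * FreeAlgebra.ι ℚ (k, l))
        (FreeAlgebra.ι ℚ (k, l) * FreeAlgebra.ι ℚ (i, j))
  | tri (i j k : Fin n) : i ≠ j → j ≠ k → i ≠ k →
      FKRel n (FreeAlgebra.ι ℚ (i, j) * FreeAlgebra.ι ℚ (j, k) +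
        FreeAlgebra.ι ℚ (j, k) * FreeAlgebra.ι ℚ (k, i) +
        FreeAlgebra.ι ℚ (k, i) * FreeAlgebra.ι ℚ (i, j)) 0

/-- The Fomin–Kirillov algebra `E_n`. -/
abbrev FK (n : ℕ) := RingQuot (FKRel n)

/-- The generator `x_{ij}` of `E_n`. -/
noncomputable def fkX {n : ℕ} (i j : Fin n) : FK n :=
  RingQuot.mkRingHom (FKRel n) (FreeAlgebra.ι ℚ (i, j))

lemma fkX_antisymm {n : ℕ} {i j : Fin n} (h : i ≠ j) : fkX i j = -fkX j i := by
  have := RingQuot.mkRingHom_rel (FKRel.antisymm i j h)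
  simpa [fkX, map_neg] using this

lemma fkX_comm {n : ℕ} {i j k l : Fin n} (h1 : i ≠ j) (h2 : i ≠ k) (h3 : i ≠ l)
    (h4 : j ≠ k) (h5 : j ≠ l) (h6 : k ≠ l) : Commute (fkX i j) (fkX k l) := by
  have := RingQuot.mkRingHom_rel (FKRel.comm i j k l h1 h2 h3 h4 h5 h6)
  simpa [fkX, Commute, SemiconjBy, map_mul] using this

lemma fkX_tri {n : ℕ} {i j k : Fin n} (h1 : i ≠ j) (h2 : j ≠ k) (h3 : i ≠ k) :
    fkX i j * fkX j k + fkX j k * fkX k i + fkX k i * fkX i j = 0 := by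
  have := RingQuot.mkRingHom_rel (FKRel.tri i j k h1 h2 h3)
  simpa [fkX, map_mul, map_add] using this

/-- The `t`-th edge of the cycle on `is 0, …, is (m-1)`. -/
noncomputable def fkE {n : ℕ} (is : ℕ → Fin n) (m t : ℕ) : FK n :=
  fkX (is (t % m)) (is ((t + 1) % m))

/-- Product of `t` consecutive edges starting at `s`. -/
noncomputable def fkP {n : ℕ} (is : ℕ → Fin n) (m s t : ℕ) : FK n :=
  ((List.range t).map (fun q => fkE is m (s + q))).prod

lemma fkP_add {n : ℕ} (is : ℕ → Fin n) (m s a b : ℕ) :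
    fkP is m s (a + b) = fkP is m s a * fkP is m (s + a) b := by
  unfold fkP
  rw [List.range_add, List.map_append, List.prod_append, List.map_map]
  congr 2
  apply List.map_congr_left
  intro q _
  simp [Function.comp, add_assoc, add_comm, add_left_comm]

lemma fkP_split {n : ℕ} (is : ℕ → Fin n) (m s a b s' t : ℕ)
    (h : t = a + b) (h2 : s' = s + a) :
    fkP is m s t = fkP is m s a * fkP is m s' b := by
  subst h; subst h2; exact fkP_add is m s a b

lemma fkP_one {n : ℕ} (is : ℕ → Fin n) (m s : ℕ) : fkP is m s 1 = fkE is m s := by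
  unfold fkP
  rw [show List.range 1 = [0] from rfl, List.map_cons, List.map_nil, List.prod_cons,
    List.prod_nil, mul_one, Nat.add_zero]

lemma fkE_period {n : ℕ} (is : ℕ → Fin n) (m t : ℕ) : fkE is m (t + m) = fkE is m t := by
  unfold fkE
  rw [Nat.add_mod_right, show t + m + 1 = t + 1 + m by ring, Nat.add_mod_right]

lemma fkP_period {n : ℕ} (is : ℕ → Fin n) (m s t : ℕ) :
    fkP is m (s + m) t = fkP is m s t := by
  unfold fkP
  congr 1
  apply List.map_congr_left
  intro q _
  rw [show s + m + q = s + q + m by ring, fkE_period]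

lemma fkP_period0 {n : ℕ} (is : ℕ → Fin n) (m t : ℕ) :
    fkP is m m t = fkP is m 0 t := by
  have h := fkP_period is m 0 t
  rw [Nat.zero_add] at h
  exact h

lemma fk_final {n : ℕ} (E1 E2 S T : FK n) (h : S + T = 0) :
    E2 * S + S * E1 + T * E1 + E2 * T = 0 := by
  have h2 : E2 * S + S * E1 + T * E1 + E2 * T = E2 * (S + T) + (S + T) * E1 := by
    rw [mul_add, add_mul]; abel
  rw [h2, h, mul_zero, zero_mul, add_zero]

lemma fk_cyclic_aux {n : ℕ} (m : ℕ) : 2 ≤ m → ∀ (is : ℕ → Fin n),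
    (∀ a b, a < m → b < m → is a = is b → a = b) →
    ∑ p ∈ Finset.range m, fkP is m p (m - 1) = 0 := by
  induction m using Nat.strong_induction_on with
  | _ m IH =>
  intro hm is hinj
  have hne : ∀ a b : ℕ, a < m → b < m → a ≠ b → is a ≠ is b := by
    intro a b ha hb hab h
    exact hab (hinj a b ha hb h)
  rcases m with _ | _ | m
  · exact absurd hm (by omega)
  · exact absurd hm (by omega)
  rcases m with _ | k
  · -- base case m = 2
    have h01 : is 0 ≠ is 1 := hne 0 1 (by omega) (by omega) (by omega)
    show ∑ p ∈ Finset.range 2, fkP is 2 p 1 = 0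
    rw [Finset.sum_range_succ, Finset.sum_range_one, fkP_one, fkP_one]
    rw [show fkE is 2 0 = fkX (is 0) (is 1) from rfl,
      show fkE is 2 1 = fkX (is 1) (is 0) from rfl]
    rw [fkX_antisymm h01]
    exact neg_add_cancel _
  · -- inductive step, m = k + 3
    have hc : ∀ a b t : ℕ, a < k+3 → b < k+3 → t+1 < k+3 → a ≠ b → a ≠ t → a ≠ t+1 →
        b ≠ t → b ≠ t+1 →
        Commute (fkX (is a) (is b)) (fkX (is t) (is (t+1))) := by
      intro a b t ha hb ht hab hat hat1 hbt hbt1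
      exact fkX_comm (hne a b (by omega) (by omega) hab) (hne a t (by omega) (by omega) hat)
        (hne a (t+1) (by omega) (by omega) hat1) (hne b t (by omega) (by omega) hbt)
        (hne b (t+1) (by omega) (by omega) hbt1)
        (hne t (t+1) (by omega) (by omega) (by omega))
    have eE : ∀ t, t < k + 2 → fkE is (k+3) t = fkX (is t) (is (t+1)) := by
      intro t ht
      unfold fkE
      rw [Nat.mod_eq_of_lt (by omega), Nat.mod_eq_of_lt (by omega)]
    have e2 : fkE is (k+3) (k+2) = fkX (is (k+2)) (is 0) := by
      unfold fkE
      rw [Nat.mod_eq_of_lt (by omega), show k+2+1 = k+3 from rfl, Nat.mod_self]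
    have e'E : ∀ t, t < k + 1 → fkE is (k+2) t = fkX (is t) (is (t+1)) := by
      intro t ht
      unfold fkE
      rw [Nat.mod_eq_of_lt (by omega), Nat.mod_eq_of_lt (by omega)]
    have e'c : fkE is (k+2) (k+1) = fkX (is (k+1)) (is 0) := by
      unfold fkE
      rw [Nat.mod_eq_of_lt (by omega), show k+1+1 = k+2 from rfl, Nat.mod_self]
    have hPsame : ∀ s t : ℕ, s + t ≤ k + 1 → fkP is (k+2) s t = fkP is (k+3) s t := by
      intro s t hst
      unfold fkP
      congr 1
      apply List.map_congr_left
      intro q hq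
      simp only [List.mem_range] at hq
      rw [e'E (s+q) (by omega), eE (s+q) (by omega)]
    -- triangle relation on vertices k+1, k+2, 0
    have htri : fkE is (k+3) (k+1) * fkE is (k+3) (k+2) =
        fkE is (k+3) (k+2) * fkX (is (k+1)) (is 0) +
        fkX (is (k+1)) (is 0) * fkE is (k+3) (k+1) := by
      have h0 := fkX_tri (hne (k+1) (k+2) (by omega) (by omega) (by omega))
        (hne (k+2) 0 (by omega) (by omega) (by omega))
        (hne (k+1) 0 (by omega) (by omega) (by omega))
      have hcc : fkX (is 0) (is (k+1)) + fkX (is (k+1)) (is 0) = 0 := by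
        rw [fkX_antisymm (hne 0 (k+1) (by omega) (by omega) (by omega))]
        exact neg_add_cancel _
      have h1 : fkX (is (k+2)) (is 0) * fkX (is 0) (is (k+1)) +
          fkX (is (k+2)) (is 0) * fkX (is (k+1)) (is 0) = 0 := by
        rw [← mul_add, hcc, mul_zero]
      have h2 : fkX (is 0) (is (k+1)) * fkX (is (k+1)) (is (k+2)) +
          fkX (is (k+1)) (is 0) * fkX (is (k+1)) (is (k+2)) = 0 := by
        rw [← add_mul, hcc, zero_mul]
      rw [eE (k+1) (by omega), e2]
      calc fkX (is (k+1)) (is (k+2)) * fkX (is (k+2)) (is 0)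
          = fkX (is (k+1)) (is (k+2)) * fkX (is (k+2)) (is 0) +
              (fkX (is (k+2)) (is 0) * fkX (is 0) (is (k+1)) +
                fkX (is (k+2)) (is 0) * fkX (is (k+1)) (is 0)) +
              (fkX (is 0) (is (k+1)) * fkX (is (k+1)) (is (k+2)) +
                fkX (is (k+1)) (is 0) * fkX (is (k+1)) (is (k+2))) := by
            rw [h1, h2, add_zero, add_zero]
        _ = fkX (is (k+1)) (is (k+2)) * fkX (is (k+2)) (is 0) +
              fkX (is (k+2)) (is 0) * fkX (is 0) (is (k+1)) +
              fkX (is 0) (is (k+1)) * fkX (is (k+1)) (is (k+2)) +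
              (fkX (is (k+2)) (is 0) * fkX (is (k+1)) (is 0) +
                fkX (is (k+1)) (is 0) * fkX (is (k+1)) (is (k+2))) := by
            abel
        _ = 0 + (fkX (is (k+2)) (is 0) * fkX (is (k+1)) (is 0) +
              fkX (is (k+1)) (is 0) * fkX (is (k+1)) (is (k+2))) := by
            rw [h0]
        _ = fkX (is (k+2)) (is 0) * fkX (is (k+1)) (is 0) +
              fkX (is (k+1)) (is 0) * fkX (is (k+1)) (is (k+2)) := by
            rw [zero_add]
    -- commutation of e(k+2) with inner segments
    have hcomm1 : ∀ j, j < k + 1 →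
        Commute (fkE is (k+3) (k+2)) (fkP is (k+3) (j+1) (k-j)) := by
      intro j hj
      unfold fkP
      apply Commute.list_prod_right
      intro x hx
      simp only [List.mem_map, List.mem_range] at hx
      obtain ⟨q, hq, rfl⟩ := hx
      rw [e2, eE (j+1+q) (by omega)]
      exact hc (k+2) 0 (j+1+q) (by omega) (by omega) (by omega) (by omega) (by omega)
        (by omega) (by omega) (by omega)
    -- commutation of e(k+1) with initial segments
    have hcomm2 : ∀ j, j ≤ k → Commute (fkE is (k+3) (k+1)) (fkP is (k+3) 0 j) := by
      intro j hj
      unfold fkP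
      apply Commute.list_prod_right
      intro x hx
      simp only [List.mem_map, List.mem_range] at hx
      obtain ⟨q, hq, rfl⟩ := hx
      rw [eE (k+1) (by omega), eE (0+q) (by omega)]
      exact hc (k+1) (k+2) (0+q) (by omega) (by omega) (by omega) (by omega) (by omega)
        (by omega) (by omega) (by omega)
    -- key identity for the cross terms
    have hkey : ∀ j, j < k + 1 →
        fkP is (k+3) (j+1) (k+2) =
          fkE is (k+3) (k+2) * fkP is (k+2) (j+1) (k+1) +
          fkP is (k+2) (j+1) (k+1) * fkE is (k+3) (k+1) := by
      intro j hj
      have hsmall : fkP is (k+2) (j+1) (k+1) =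
          fkP is (k+3) (j+1) (k-j) * fkX (is (k+1)) (is 0) * fkP is (k+3) 0 j := by
        calc fkP is (k+2) (j+1) (k+1)
            = fkP is (k+2) (j+1) (k-j) * fkP is (k+2) (k+1) (1+j) :=
              fkP_split is (k+2) (j+1) (k-j) (1+j) (k+1) (k+1) (by omega) (by omega)
          _ = fkP is (k+2) (j+1) (k-j) * (fkE is (k+2) (k+1) * fkP is (k+2) (k+2) j) := by
              rw [fkP_split is (k+2) (k+1) 1 j (k+2) (1+j) rfl (by omega), fkP_one]
          _ = fkP is (k+3) (j+1) (k-j) * (fkX (is (k+1)) (is 0) * fkP is (k+3) 0 j) := by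
              rw [hPsame (j+1) (k-j) (by omega), e'c, fkP_period0, hPsame 0 j (by omega)]
          _ = fkP is (k+3) (j+1) (k-j) * fkX (is (k+1)) (is 0) * fkP is (k+3) 0 j := by
              rw [mul_assoc]
      have hbig : fkP is (k+3) (j+1) (k+2) =
          fkP is (k+3) (j+1) (k-j) *
            (fkE is (k+3) (k+1) * (fkE is (k+3) (k+2) * fkP is (k+3) 0 j)) := by
        calc fkP is (k+3) (j+1) (k+2)
            = fkP is (k+3) (j+1) (k-j) * fkP is (k+3) (k+1) (1+(1+j)) :=
              fkP_split is (k+3) (j+1) (k-j) (1+(1+j)) (k+1) (k+2) (by omega) (by omega)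
          _ = fkP is (k+3) (j+1) (k-j) * (fkE is (k+3) (k+1) * fkP is (k+3) (k+2) (1+j)) := by
              rw [fkP_split is (k+3) (k+1) 1 (1+j) (k+2) (1+(1+j)) rfl (by omega), fkP_one]
          _ = fkP is (k+3) (j+1) (k-j) *
              (fkE is (k+3) (k+1) * (fkE is (k+3) (k+2) * fkP is (k+3) 0 j)) := by
              rw [fkP_split is (k+3) (k+2) 1 j (k+3) (1+j) rfl (by omega), fkP_one,
                fkP_period0]
      calc fkP is (k+3) (j+1) (k+2)
          = fkP is (k+3) (j+1) (k-j) *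
              (fkE is (k+3) (k+1) * (fkE is (k+3) (k+2) * fkP is (k+3) 0 j)) := hbig
        _ = fkP is (k+3) (j+1) (k-j) *
              (fkE is (k+3) (k+1) * fkE is (k+3) (k+2) * fkP is (k+3) 0 j) := by
            noncomm_ring
        _ = fkP is (k+3) (j+1) (k-j) *
              ((fkE is (k+3) (k+2) * fkX (is (k+1)) (is 0) +
                fkX (is (k+1)) (is 0) * fkE is (k+3) (k+1)) * fkP is (k+3) 0 j) := by
            rw [htri]
        _ = fkP is (k+3) (j+1) (k-j) * fkE is (k+3) (k+2) *
              (fkX (is (k+1)) (is 0) * fkP is (k+3) 0 j) +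
            fkP is (k+3) (j+1) (k-j) * fkX (is (k+1)) (is 0) *
              (fkE is (k+3) (k+1) * fkP is (k+3) 0 j) := by
            noncomm_ring
        _ = fkE is (k+3) (k+2) * fkP is (k+3) (j+1) (k-j) *
              (fkX (is (k+1)) (is 0) * fkP is (k+3) 0 j) +
            fkP is (k+3) (j+1) (k-j) * fkX (is (k+1)) (is 0) *
              (fkP is (k+3) 0 j * fkE is (k+3) (k+1)) := by
            rw [← (hcomm1 j hj).eq, (hcomm2 j (by omega)).eq]
        _ = fkE is (k+3) (k+2) *
              (fkP is (k+3) (j+1) (k-j) * fkX (is (k+1)) (is 0) * fkP is (k+3) 0 j) +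
            (fkP is (k+3) (j+1) (k-j) * fkX (is (k+1)) (is 0) * fkP is (k+3) 0 j) *
              fkE is (k+3) (k+1) := by
            noncomm_ring
        _ = fkE is (k+3) (k+2) * fkP is (k+2) (j+1) (k+1) +
            fkP is (k+2) (j+1) (k+1) * fkE is (k+3) (k+1) := by
            rw [← hsmall]
    -- induction hypothesis for the (k+2)-cycle
    have hIH : ∑ p ∈ Finset.range (k+2), fkP is (k+2) p (k+1) = 0 := by
      have := IH (k+2) (by omega) (by omega) is
        (fun a b ha hb h => hinj a b (by omega) (by omega) h)
      simpa using this
    rw [Finset.sum_range_succ'] at hIH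
    rw [hPsame 0 (k+1) (by omega)] at hIH
    -- first and last terms of the big cycle
    have hterm0 : fkP is (k+3) 0 (k+2) = fkP is (k+3) 0 (k+1) * fkE is (k+3) (k+1) := by
      rw [fkP_split is (k+3) 0 (k+1) 1 (k+1) (k+2) (by omega) (by omega), fkP_one]
    have htermlast : fkP is (k+3) (k+2) (k+2) =
        fkE is (k+3) (k+2) * fkP is (k+3) 0 (k+1) := by
      rw [fkP_split is (k+3) (k+2) 1 (k+1) (k+3) (k+2) (by omega) (by omega), fkP_one,
        fkP_period0]
    -- assemble
    show ∑ p ∈ Finset.range (k+3), fkP is (k+3) p (k+2) = 0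
    rw [Finset.sum_range_succ, Finset.sum_range_succ']
    rw [hterm0, htermlast]
    rw [Finset.sum_congr rfl (fun j hj => hkey j (Finset.mem_range.mp hj))]
    rw [Finset.sum_add_distrib, ← Finset.mul_sum, ← Finset.sum_mul]
    exact fk_final _ _ _ _ hIH

/-- The cyclic relation in the Fomin–Kirillov algebra: for distinct `i_1, ..., i_m`,
`x_{i_1i_2}x_{i_2i_3}···x_{i_{m-1}i_m} + x_{i_2i_3}···x_{i_mi_1} + ··· +
x_{i_mi_1}x_{i_1i_2}···x_{i_{m-2}i_{m-1}} = 0`. -/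
theorem fk_cyclic_relation {n : ℕ} (m : ℕ) (hm : 2 ≤ m) (is : ℕ → Fin n)
    (hinj : ∀ a b, a < m → b < m → is a = is b → a = b) :
    ∑ p ∈ Finset.range m,
      ((List.range (m - 1)).map
        (fun q => fkX (is ((p + q) % m)) (is ((p + q + 1) % m)))).prod = 0 := by
  exact fk_cyclic_aux m hm is hinj
end

section
/- In the commutative ℚ-algebra with generators u_{ij} = −u_{ji} for 1 ≤ i < j ≤ n and relations u_{ij}² = 0 together with the cycle relations u_{i_1i_2}u_{i_2i_3}···u_{i_{m−1}i_m} + u_{i_2i_3}···u_{i_mi_1} + ··· + u_{i_mi_1}···u_{i_{m−2}i_{m−1}} = 0 for every cycle (i_1,...,i_m) of distinct indices, any monomial whose set of edges {i,j} contains a cycle of the complete graph K_n is equal to zero. -/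
open MvPolynomial in
/-- The defining relations of the Artinian Orlik–Terao algebra `U_{K_n}` of the complete
graph: `u_{ij} = -u_{ji}`, `u_{ij}² = 0`, and for every cycle `(i_1, ..., i_m)` of distinct
indices the relation `u_{i_1i_2}···u_{i_{m-1}i_m} + u_{i_2i_3}···u_{i_mi_1} + ··· +
u_{i_mi_1}···u_{i_{m-2}i_{m-1}} = 0`. -/
def OTKnRels (n : ℕ) : Set (MvPolynomial (Fin n × Fin n) ℚ) :=
  {f | (∃ i j : Fin n, i ≠ j ∧ f = X (i, j) + X (j, i)) ∨
       (∃ i j : Fin n, i ≠ j ∧ f = X (i, j) * X (i, j)) ∨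
       (∃ (m : ℕ) (is : ℕ → Fin n), 3 ≤ m ∧
         (∀ a b, a < m → b < m → is a = is b → a = b) ∧
         f = ∑ p ∈ Finset.range m, ∏ q ∈ Finset.range (m - 1),
               X (is ((p + q) % m), is ((p + q + 1) % m)))}

/-- The Artinian Orlik–Terao algebra `U_{K_n}`. -/
abbrev OTKn (n : ℕ) := MvPolynomial (Fin n × Fin n) ℚ ⧸ Ideal.span (OTKnRels n)

/-! Fix a cycle `i₀ → i₁ → ⋯ → i_{m-1} → i₀` and write `aₖ = u_{iₖ iₖ₊₁}`. Multiply the cycle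
relation by `a_{m-1}`: every summand except the one omitting `a_{m-1}` contains it, so it dies
by `a_{m-1}² = 0`, and the survivor is `a₀ ⋯ a_{m-1}`, which therefore vanishes. A monomial whose
edges contain the cycle has among its factors each `aₖ` up to the sign `u_{ji} = -u_{ij}`, so it is
a multiple of this product. -/

theorem Finset.prod_range_eq_zero_of_cyclic_sum_eq_zero {R : Type*} [CommSemiring R] {m : ℕ}
    (hm : 0 < m) (a : ℕ → R) (hsq : a (m - 1) * a (m - 1) = 0)
    (hsum : ∑ p ∈ range m, ∏ q ∈ range (m - 1), a ((p + q) % m) = 0) :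
    ∏ k ∈ range m, a k = 0 := by
  have hkill : ∀ p ∈ range m, p ≠ 0 → a (m - 1) * ∏ q ∈ range (m - 1), a ((p + q) % m) = 0 := by
    intro p hp hp0
    have hq : m - 1 - p ∈ range (m - 1) := mem_range.mpr (by grind)
    have hidx : (p + (m - 1 - p)) % m = m - 1 := by
      rw [show p + (m - 1 - p) = m - 1 by grind]; exact Nat.mod_eq_of_lt (by omega)
    rw [← mul_prod_erase _ _ hq, hidx, ← mul_assoc, hsq, zero_mul]
  have hfirst : ∏ q ∈ range (m - 1), a ((0 + q) % m) = ∏ k ∈ range (m - 1), a k :=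
    prod_congr rfl fun q hq => by rw [zero_add, Nat.mod_eq_of_lt (by grind)]
  calc ∏ k ∈ range m, a k = a (m - 1) * ∏ k ∈ range (m - 1), a k := by
        rw [← Nat.sub_add_cancel hm, prod_range_succ, Nat.add_sub_cancel, mul_comm]
    _ = a (m - 1) * ∑ p ∈ range m, ∏ q ∈ range (m - 1), a ((p + q) % m) := by
        rw [mul_sum, sum_eq_single_of_mem 0 (mem_range.mpr hm) hkill, hfirst]
    _ = 0 := by rw [hsum, mul_zero]

namespace SimpleGraph.Walk

variable {V : Type*} {G : SimpleGraph V}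

theorem prod_darts_map {M : Type*} [CommMonoid M] {u v : V} (c : G.Walk u v) (g : V × V → M) :
    (c.darts.map fun d => g d.toProd).prod =
      ∏ k ∈ Finset.range c.length, g (c.getVert k, c.getVert (k + 1)) := by
  induction c with
  | nil => simp
  | cons h q ih => simp [Finset.prod_range_succ', ih, mul_comm]

theorem getVert_add_one_mod_length {v : V} (c : G.Walk v v) (k : ℕ) :
    c.getVert ((k + 1) % c.length) = c.getVert (k % c.length + 1) := by
  rcases Nat.eq_zero_or_pos c.length with h0 | hpos
  · simp [h0]
  rw [← Nat.mod_add_mod]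
  rcases (show k % c.length + 1 ≤ c.length from Nat.mod_lt k hpos).lt_or_eq with hlt | heq
  · rw [Nat.mod_eq_of_lt hlt]
  · rw [heq, Nat.mod_self, getVert_zero, getVert_length]

end SimpleGraph.Walk

namespace OTKn

open MvPolynomial

variable {n : ℕ}

noncomputable def u (p : Fin n × Fin n) : OTKn n :=
  Ideal.Quotient.mk _ (X p)

theorem mk_eq_zero_of_mem_rels {f : MvPolynomial (Fin n × Fin n) ℚ} (hf : f ∈ OTKnRels n) :
    Ideal.Quotient.mk (Ideal.span (OTKnRels n)) f = 0 :=
  Ideal.Quotient.eq_zero_iff_mem.mpr (Ideal.subset_span hf)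

theorem u_swap {i j : Fin n} (h : i ≠ j) : u (j, i) = -u (i, j) := by
  have hrel := mk_eq_zero_of_mem_rels (Or.inl ⟨i, j, h, rfl⟩)
  rw [map_add] at hrel
  exact eq_neg_of_add_eq_zero_right hrel

theorem u_mul_self {i j : Fin n} (h : i ≠ j) : u (i, j) * u (i, j) = 0 :=
  (map_mul _ _ _).symm.trans (mk_eq_zero_of_mem_rels (Or.inr (Or.inl ⟨i, j, h, rfl⟩)))

theorem cyclic_sum_eq_zero {m : ℕ} (is : ℕ → Fin n) (hm : 3 ≤ m)
    (hinj : ∀ a b, a < m → b < m → is a = is b → a = b) :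
    ∑ p ∈ Finset.range m, ∏ q ∈ Finset.range (m - 1),
        u (is ((p + q) % m), is ((p + q + 1) % m)) = 0 := by
  have hrel := mk_eq_zero_of_mem_rels (Or.inr (Or.inr ⟨m, is, hm, hinj, rfl⟩))
  simp only [map_sum, map_prod] at hrel
  exact hrel

theorem u_dvd_u_of_mk_eq {p q : Fin n × Fin n} (h : s(p.1, p.2) = s(q.1, q.2)) : u q ∣ u p := by
  obtain rfl | rfl := Sym2.mk_eq_mk_iff.mp h
  · rfl
  obtain ⟨i, j⟩ := q
  obtain rfl | hij := eq_or_ne i j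
  · rfl
  · rw [Prod.swap_prod_mk, u_swap hij]
    exact Dvd.intro (-1) (mul_neg_one (u (i, j)))

theorem prod_darts_eq_zero_of_isCycle {G : SimpleGraph (Fin n)} {v : Fin n} {c : G.Walk v v}
    (hc : c.IsCycle) : (c.darts.map fun d => u d.toProd).prod = 0 := by
  set m := c.length
  have hm : 3 ≤ m := hc.three_le_length
  have hinj : ∀ a b, a < m → b < m → c.getVert a = c.getVert b → a = b :=
    fun a b ha hb h => hc.getVert_injOn' (by grind) (by grind) h
  rw [c.prod_darts_map u]
  refine Finset.prod_range_eq_zero_of_cyclic_sum_eq_zero (by omega) _ ?_ ?_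
  · exact u_mul_self (c.adj_getVert_succ (by omega)).ne
  · convert cyclic_sum_eq_zero c.getVert hm hinj using 4 with p _ q _
    rw [c.getVert_add_one_mod_length]

theorem prod_darts_dvd_prod_of_isTrail {G : SimpleGraph (Fin n)} {L : List (Fin n × Fin n)}
    (hG : G.edgeSet ⊆ {s | ∃ p ∈ L, s = s(p.1, p.2)}) {v w : Fin n} {c : G.Walk v w}
    (hc : c.IsTrail) : (c.darts.map fun d => u d.toProd).prod ∣ (L.map u).prod := by
  choose rep hrepL hrep using fun d : G.Dart => hG d.edge_mem
  have hedges : (c.darts.map rep).map (fun p => s(p.1, p.2)) = c.edges := by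
    rw [List.map_map]
    exact List.map_congr_left fun d _ => (hrep d).symm
  have hsubperm : (c.darts.map rep).Subperm L :=
    ((hedges ▸ hc.edges_nodup).of_map _).subperm
      (by simpa [List.subset_def] using fun d _ => hrepL d)
  calc (c.darts.map fun d => u d.toProd).prod ∣ (c.darts.map fun d => u (rep d)).prod := by
        simpa using Multiset.prod_dvd_prod_of_dvd (S := (c.darts : Multiset _)) _ _
          fun d _ => u_dvd_u_of_mk_eq (hrep d).symm
    _ ∣ (L.map u).prod := by
        simpa [Function.comp_def] using Multiset.prod_dvd_prod_of_le
          (Multiset.map_le_map (f := u) (Multiset.coe_le.mpr hsubperm))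

end OTKn

open OTKn in
theorem otKn_monomial_with_cycle_eq_zero_general {n : ℕ} (L : List (Fin n × Fin n))
    (hcyc : ∃ (v : Fin n)
      (c : (SimpleGraph.fromEdgeSet {s | ∃ p ∈ L, s = Sym2.mk p.1 p.2}).Walk v v),
      c.IsCycle) :
    Ideal.Quotient.mk (Ideal.span (OTKnRels n))
      ((L.map fun p => MvPolynomial.X p).prod) = 0 := by
  obtain ⟨v, c, hc⟩ := hcyc
  have hdvd := prod_darts_dvd_prod_of_isTrail
    ((SimpleGraph.edgeSet_fromEdgeSet _).trans_subset Set.sdiff_subset) hc.isTrail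
  rw [prod_darts_eq_zero_of_isCycle hc, zero_dvd_iff] at hdvd
  rw [map_list_prod, List.map_map]
  exact hdvd

/-- In `U_{K_n}`, any monomial (product of distinct generators) whose set of edges
contains a graph cycle equals zero. -/
theorem otKn_monomial_with_cycle_eq_zero {n : ℕ} (L : List (Fin n × Fin n))
    (hloop : ∀ p ∈ L, p.1 ≠ p.2)
    (hdist : (L.map fun p => Sym2.mk p.1 p.2).Nodup)
    (hcyc : ∃ (v : Fin n)
      (c : (SimpleGraph.fromEdgeSet {s | ∃ p ∈ L, s = Sym2.mk p.1 p.2}).Walk v v),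
      c.IsCycle) :
    Ideal.Quotient.mk (Ideal.span (OTKnRels n))
      ((L.map fun p => MvPolynomial.X p).prod) = 0 :=
  otKn_monomial_with_cycle_eq_zero_general L hcyc
end

section
/- Let T be a noncrossing tree on [n] and let P = x_{e_1}···x_{e_{n−1}} be an ordering of the edges of T (viewed as a word). If P respects T (for every vertex i, the left-to-right order in P of the edges incident to i agrees with the clockwise order of those edges around i in the drawing of T), then the product of the corresponding transpositions, read left to right, equals the n-cycle (1 2 ··· n). -/
/-- In the standard drawing of a noncrossing graph (vertices on a line, arcs above),
the neighbor `k` of `v` comes strictly before the neighbor `k'` of `v` in the clockwise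
order of the arcs at `v`: the arcs to smaller neighbors come first in decreasing order,
followed by the arcs to larger neighbors in decreasing order. -/
def CwBefore {n : ℕ} (v k k' : Fin n) : Prop :=
  (k < v ∧ k' < v ∧ k' < k) ∨ (k < v ∧ v < k') ∨ (v < k ∧ v < k' ∧ k' < k)

/-- The endpoint of the edge `p` other than `v`. -/
def otherEnd {n : ℕ} (p : Fin n × Fin n) (v : Fin n) : Fin n :=
  if p.1 = v then p.2 else p.1

/-- The word `L` of edges respects the drawing: for every vertex `v`, the edges incident
to `v` occur in `L` in their clockwise order around `v`. -/
def Respects {n : ℕ} (L : List (Fin n × Fin n)) : Prop :=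
  ∀ a b : Fin L.length, a < b → ∀ v : Fin n,
    ((L.get a).1 = v ∨ (L.get a).2 = v) → ((L.get b).1 = v ∨ (L.get b).2 = v) →
    CwBefore v (otherEnd (L.get a) v) (otherEnd (L.get b) v)

/-! The first edge `(a, b)` of the word splits the vertices into the interval `[a, b)` and its
complement, and by the clockwise condition at `a` and `b` together with noncrossingness every later
edge lies on one side. The transpositions of the two sides commute, and the edges on each side
connect that side, so by induction the word is `(a b)` times the increasing cycles of the two
sides, which is the increasing cycle of all vertices. -/

open List Relation

theorem Equiv.swap_commute_swap {α : Type*} [DecidableEq α] {a b c d : α} (hac : a ≠ c)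
    (had : a ≠ d) (hbc : b ≠ c) (hbd : b ≠ d) : Commute (swap a b) (swap c d) := by
  rw [Commute, SemiconjBy, mul_swap_eq_swap_mul, swap_apply_of_ne_of_ne hac.symm hbc.symm,
    swap_apply_of_ne_of_ne had.symm hbd.symm]

theorem List.prod_map_eq_prod_map_filter_mul_prod_map_filter_not {β M : Type*} [Monoid M]
    (f : β → M) (p : β → Prop) [DecidablePred p] {l : List β}
    (hcomm : ∀ x ∈ l, ∀ y ∈ l, ¬p x → p y → Commute (f x) (f y)) :
    (l.map f).prod = ((l.filter p).map f).prod * ((l.filter fun x => ¬p x).map f).prod := by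
  induction l with
  | nil => simp
  | cons x l ih =>
    rw [map_cons, prod_cons,
      ih fun y hy z hz => hcomm y (mem_cons_of_mem x hy) z (mem_cons_of_mem x hz)]
    by_cases hx : p x
    · simp [hx, mul_assoc]
    · have hx' : Commute (f x) ((l.filter p).map f).prod :=
        Commute.list_prod_right _ _ fun g hg => by
          obtain ⟨y, hy, rfl⟩ := mem_map.1 hg
          exact hcomm x mem_cons_self y (mem_cons_of_mem x (mem_of_mem_filter hy)) hx
            (of_decide_eq_true (mem_filter.1 hy).2)
      simp [hx, ← mul_assoc, hx'.eq]

section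

variable {α : Type*}

def Spans (L : List (α × α)) (l : List α) : Prop :=
  (∀ p ∈ L, p.1 ∈ l ∧ p.2 ∈ l) ∧
    ∀ x ∈ l, ∀ y ∈ l, ReflTransGen (SymmGen fun x y => (x, y) ∈ L) x y

theorem Spans.filter {P : α → Prop} [DecidablePred P] {e : α × α} {L : List (α × α)}
    {l : List α} (h : Spans (e :: L) l) (hL : ∀ q ∈ L, P q.1 ↔ P q.2)
    (he : P e.1 ↔ ¬P e.2) :
    Spans (L.filter (P ·.1)) (l.filter P) := by
  refine ⟨fun q hq => ?_, fun x hx y hy => ?_⟩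
  · obtain ⟨hqL, hq1⟩ := mem_filter.1 hq
    replace hq1 : P q.1 := of_decide_eq_true hq1
    obtain ⟨hq1l, hq2l⟩ := h.1 q (mem_cons_of_mem e hqL)
    exact ⟨mem_filter.2 ⟨hq1l, decide_eq_true hq1⟩,
      mem_filter.2 ⟨hq2l, decide_eq_true ((hL q hqL).1 hq1)⟩⟩
  -- Contract every vertex outside `P` to the endpoint `c` of `e` satisfying `P`.
  obtain ⟨hx, hxP⟩ := mem_filter.1 hx
  obtain ⟨hy, hyP⟩ := mem_filter.1 hy
  set c := if P e.1 then e.1 else e.2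
  set f : α → α := fun z => if P z then z else c
  have hfc : f e.1 = c ∧ f e.2 = c := by by_cases P e.1 <;> simp_all [f, c]
  have hstep : ∀ q ∈ e :: L,
      ReflTransGen (SymmGen fun x y => (x, y) ∈ L.filter (P ·.1)) (f q.1) (f q.2) := by
    intro q hq
    rcases mem_cons.1 hq with rfl | hqL
    · rw [hfc.1, hfc.2]
    by_cases hq1 : P q.1
    · have hq2 := (hL q hqL).1 hq1
      simp only [f, if_pos hq1, if_pos hq2]
      exact .single (.of_rel (mem_filter.2 ⟨hqL, decide_eq_true hq1⟩))
    · have hq2 := (hL q hqL).not.1 hq1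
      simp only [f, if_neg hq1, if_neg hq2]
      rfl
  have := (h.2 x hx y hy).lift' f fun a b hab =>
    hab.elim (hstep (a, b)) fun hba => symm (hstep (b, a) hba)
  simpa [Function.onFun, f, of_decide_eq_true hxP, of_decide_eq_true hyP] using this

theorem List.formPerm_cons_append_cons [DecidableEq α] {a b : α} {v w : List α}
    (h : (a :: v ++ b :: w).Nodup) :
    formPerm (a :: v ++ b :: w) =
      Equiv.swap a b * formPerm (a :: v) * formPerm (b :: w) := by
  induction v generalizing a with
  | nil => simp
  | cons c v ih =>
    simp only [cons_append, nodup_cons, mem_cons, mem_append, not_or] at h ih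
    rw [cons_append, cons_append, formPerm_cons_cons, ih h.2, formPerm_cons_cons]
    simp only [← mul_assoc]
    rw [Equiv.mul_swap_eq_swap_mul (Equiv.swap a c) c b, Equiv.swap_apply_right,
      Equiv.swap_apply_of_ne_of_ne (Ne.symm h.1.2.2.1) (Ne.symm h.2.1.2.1)]

theorem List.Pairwise.exists_eq_append_cons_append_cons [LinearOrder α] {l : List α}
    (hl : l.Pairwise (· < ·)) {a b : α} (ha : a ∈ l) (hb : b ∈ l) (hab : a < b) :
    ∃ u v w, l = u ++ a :: (v ++ b :: w) ∧
      (∀ x ∈ u, x < a) ∧ (∀ x ∈ v, a < x ∧ x < b) ∧ ∀ x ∈ w, b < x := by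
  obtain ⟨u, r, rfl⟩ := append_of_mem ha
  have hbr : b ∈ r := by
    rcases mem_append.1 hb with hbu | hbr
    · exact absurd ((pairwise_append.1 hl).2.2 b hbu a mem_cons_self) hab.not_gt
    · exact (mem_cons.1 hbr).resolve_left hab.ne'
  obtain ⟨v, w, rfl⟩ := append_of_mem hbr
  simp only [pairwise_append, pairwise_cons, mem_append, mem_cons] at hl
  exact ⟨u, v, w, rfl, fun x hx => hl.2.2 x hx a (.inl rfl),
    fun x hx => ⟨hl.2.1.1 x (.inl hx), hl.2.1.2.2.2 x hx b (.inl rfl)⟩, hl.2.1.2.2.1.1⟩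

theorem List.formPerm_eq_swap_mul_formPerm_filter [LinearOrder α] {l : List α}
    (hl : l.Pairwise (· < ·)) {a b : α} (ha : a ∈ l) (hb : b ∈ l) (hab : a < b) :
    formPerm l = Equiv.swap a b * formPerm (l.filter (· ∈ Set.Ico a b)) *
      formPerm (l.filter (· ∉ Set.Ico a b)) := by
  have hnd : l.Nodup := hl.imp ne_of_lt
  obtain ⟨u, v, w, rfl, hu, hv, hw⟩ := hl.exists_eq_append_cons_append_cons ha hb hab
  have hin : (u ++ a :: (v ++ b :: w)).filter (· ∈ Set.Ico a b) = a :: v := by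
    rw [filter_append, filter_eq_nil_iff.2 fun x hx => by simp [(hu x hx).not_ge],
      filter_cons_of_pos (by simpa using hab), filter_append,
      filter_eq_self.2 fun x hx => by simp [(hv x hx).1.le, (hv x hx).2],
      filter_eq_nil_iff.2 fun x hx => ?_, append_nil, nil_append]
    rcases mem_cons.1 hx with rfl | hx
    · simp
    · simp [(hw x hx).not_gt]
  have hout : (u ++ a :: (v ++ b :: w)).filter (· ∉ Set.Ico a b) = u ++ b :: w := by
    rw [filter_append, filter_eq_self.2 fun x hx => by simp [hu x hx],
      filter_cons_of_neg (by simpa using hab), filter_append,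
      filter_eq_nil_iff.2 fun x hx => by simp [(hv x hx).1.le, (hv x hx).2],
      filter_eq_self.2 fun x hx => ?_, nil_append]
    rcases mem_cons.1 hx with rfl | hx
    · simp
    · simp [(hw x hx).not_gt]
  have hrot : (u ++ a :: (v ++ b :: w)) ~r (a :: v ++ b :: (w ++ u)) := by
    simpa using isRotated_append (l := u) (l' := a :: v ++ b :: w)
  rw [hin, hout, formPerm_eq_of_isRotated hnd hrot,
    formPerm_cons_append_cons (hrot.nodup_iff.1 hnd),
    formPerm_eq_of_isRotated (hout ▸ hnd.filter _) (isRotated_append (l := u) (l' := b :: w))]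
  rfl

theorem List.prod_map_swap_eq_formPerm [LinearOrder α] :
    ∀ {L : List (α × α)} {l : List α}, l.Pairwise (· < ·) → (∀ p ∈ L, p.1 < p.2) →
      Spans L l →
      L.Pairwise (fun e q => q.1 ∈ Set.Ico e.1 e.2 ↔ q.2 ∈ Set.Ico e.1 e.2) →
      (L.map fun p => Equiv.swap p.1 p.2).prod = formPerm l
  | [], l, hl, _, hS, _ => by
    rw [map_nil, prod_nil, eq_comm, formPerm_eq_one_iff _ (hl.imp ne_of_lt)]
    match l, hl, hS with
    | [], _, _ | [_], _, _ => simp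
    | x :: y :: _, hl, hS =>
      have hxy := (reflTransGen_iff_eq fun _ h => by simp [SymmGen] at h).1
        (hS.2 y (by simp) x (by simp))
      simp [hxy] at hl
  | e :: L, l, hl, hlt, hS, hsep => by
    set I := Set.Ico e.1 e.2
    obtain ⟨he, hlt⟩ := forall_mem_cons.1 hlt
    obtain ⟨hsepe, hsep⟩ := pairwise_cons.1 hsep
    have hI : e.1 ∈ I ↔ e.2 ∉ I := iff_of_true ⟨le_rfl, he⟩ fun h => h.2.false
    obtain ⟨hal, hbl⟩ := hS.1 e mem_cons_self
    rw [map_cons, prod_cons,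
      prod_map_eq_prod_map_filter_mul_prod_map_filter_not _ (fun q => q.1 ∈ I) ?comm,
      prod_map_swap_eq_formPerm (hl.filter _) (fun p hp => hlt p (mem_of_mem_filter hp))
        (hS.filter hsepe hI) (hsep.filter _),
      prod_map_swap_eq_formPerm (hl.filter _) (fun p hp => hlt p (mem_of_mem_filter hp))
        (hS.filter (P := (· ∉ I)) (fun q hq => (hsepe q hq).not) hI.not)
        (hsep.filter _),
      ← mul_assoc, formPerm_eq_swap_mul_formPerm_filter hl hal hbl he]
    intro p hp q hq hpI hqI
    have hpI' := (hsepe p hp).not.1 hpI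
    have hqI' := (hsepe q hq).1 hqI
    exact Equiv.swap_commute_swap (ne_of_mem_of_not_mem hqI hpI).symm
      (ne_of_mem_of_not_mem hqI' hpI).symm (ne_of_mem_of_not_mem hqI hpI').symm
      (ne_of_mem_of_not_mem hqI' hpI').symm
termination_by L => L.length
decreasing_by all_goals exact Nat.lt_succ_of_le (length_filter_le _ _)

end

theorem SimpleGraph.Reachable.reflTransGen_symmGen {V : Type*} {G : SimpleGraph V}
    {L : List (V × V)} (hL : ∀ e ∈ G.edgeSet, ∃ p ∈ L, e = s(p.1, p.2)) {x y : V}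
    (h : G.Reachable x y) : ReflTransGen (SymmGen fun x y => (x, y) ∈ L) x y := by
  refine ReflTransGen.mono (fun u v huv => ?_) _ _ ((reachable_iff_reflTransGen x y).1 h)
  obtain ⟨p, hp, huvp⟩ := hL s(u, v) huv
  rcases Sym2.eq_iff.1 huvp with ⟨rfl, rfl⟩ | ⟨rfl, rfl⟩
  exacts [.inl hp, .inr hp]

theorem List.formPerm_finRange (n : ℕ) : (finRange n).formPerm = finRotate n := by
  rcases n with _ | n
  · exact Subsingleton.elim _ _
  ext i
  have h := formPerm_apply_getElem (finRange (n + 1)) (nodup_finRange _) i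
    (by simp [i.is_lt])
  simp only [getElem_finRange, length_finRange] at h
  rw [finRotate_apply, Fin.val_add, Fin.val_one', Nat.add_mod_mod]
  simpa using congrArg Fin.val h

def CwOrdered {n : ℕ} (p q : Fin n × Fin n) : Prop :=
  ∀ v, (p.1 = v ∨ p.2 = v) → (q.1 = v ∨ q.2 = v) →
    CwBefore v (otherEnd p v) (otherEnd q v)

theorem Respects.pairwise_cwOrdered {n : ℕ} {L : List (Fin n × Fin n)} (h : Respects L) :
    L.Pairwise CwOrdered :=
  List.pairwise_iff_get.2 h

theorem CwOrdered.mem_Ico_iff {n : ℕ} {T : SimpleGraph (Fin n)} (hnc : Noncrossing T)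
    {e q : Fin n × Fin n} (he : e.1 < e.2) (hq : q.1 < q.2) (hTe : T.Adj e.1 e.2)
    (hTq : T.Adj q.1 q.2) (h : CwOrdered e q) :
    q.1 ∈ Set.Ico e.1 e.2 ↔ q.2 ∈ Set.Ico e.1 e.2 := by
  obtain ⟨a, b⟩ := e
  obtain ⟨c, d⟩ := q
  have hcross₁ := fun h₁ h₂ h₃ => hnc a c b d h₁ h₂ h₃ hTe hTq
  have hcross₂ := fun h₁ h₂ h₃ => hnc c a d b h₁ h₂ h₃ hTq hTe
  -- Only a shared endpoint needs the clockwise order; otherwise noncrossingness decides.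
  have hcw_a := h a (.inl rfl)
  have hcw_b := h b (.inr rfl)
  simp only [otherEnd, CwBefore, Set.mem_Ico] at he hq hcross₁ hcross₂ hcw_a hcw_b ⊢
  grind

theorem respects_prod_eq_cycle_general {n : ℕ} (T : SimpleGraph (Fin n))
    (hT : T.IsTree) (hnc : Noncrossing T) (L : List (Fin n × Fin n))
    (hedges : ∀ p ∈ L, p.1 < p.2 ∧ T.Adj p.1 p.2)
    (hall : ∀ e, e ∈ T.edgeSet ↔ ∃ p ∈ L, e = Sym2.mk p.1 p.2)
    (hresp : Respects L) :
    (L.map fun p => Equiv.swap p.1 p.2).prod = finRotate n := by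
  have hsep := hresp.pairwise_cwOrdered.imp_of_mem fun he hq h =>
    h.mem_Ico_iff hnc (hedges _ he).1 (hedges _ hq).1 (hedges _ he).2 (hedges _ hq).2
  have hspans : Spans L (finRange n) :=
    ⟨fun p _ => ⟨mem_finRange _, mem_finRange _⟩, fun x _ y _ =>
      (hT.connected.preconnected x y).reflTransGen_symmGen fun e he => (hall e).1 he⟩
  rw [← formPerm_finRange]
  exact prod_map_swap_eq_formPerm (sortedLT_finRange n).pairwise (fun p hp => (hedges p hp).1)
    hspans hsep

/-- If an ordering `L` of the edges of a noncrossing tree `T` on `[n]` respects `T`, then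
the product of the corresponding transpositions, read left to right, is the `n`-cycle
`(1 2 ⋯ n)`. -/
theorem respects_prod_eq_cycle {n : ℕ} (hn : 1 ≤ n) (T : SimpleGraph (Fin n))
    (hT : T.IsTree) (hnc : Noncrossing T) (L : List (Fin n × Fin n))
    (hedges : ∀ p ∈ L, p.1 < p.2 ∧ T.Adj p.1 p.2)
    (hnodup : (L.map fun p => Sym2.mk p.1 p.2).Nodup)
    (hall : ∀ e, e ∈ T.edgeSet ↔ ∃ p ∈ L, e = Sym2.mk p.1 p.2)
    (hresp : Respects L) :
    (L.map fun p => Equiv.swap p.1 p.2).prod = finRotate n :=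
  respects_prod_eq_cycle_general T hT hnc L hedges hall hresp
end

section
/- Any two orderings P and P' of the edges of a noncrossing tree T on [n] that both respect T are related by a sequence of adjacent swaps of consecutive edges that are vertex-disjoint (commuting moves). -/
/-- One commuting move: swap two adjacent edges in the word that share no vertex. -/
def CommMove {n : ℕ} (L L' : List (Fin n × Fin n)) : Prop :=
  ∃ (l₁ l₂ : List (Fin n × Fin n)) (a b : Fin n × Fin n),
    a.1 ≠ b.1 ∧ a.1 ≠ b.2 ∧ a.2 ≠ b.1 ∧ a.2 ≠ b.2 ∧
    L = l₁ ++ a :: b :: l₂ ∧ L' = l₁ ++ b :: a :: l₂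

/-
Say that the edge `p` precedes `q` if `p` comes first clockwise at every common vertex. A word
respects `T` exactly when it is pairwise of this kind, and two edges precede each other exactly when
they are vertex-disjoint. Both words list the same edges, so it suffices to show, for any relation
`R`, that two `R`-pairwise permutations of each other are connected by swaps of adjacent letters
related by `R` both ways: move the first letter `a` of `L` to its place in `L'`; every letter it
passes precedes it in `L'` and follows it in `L`, hence commutes with it.
-/

namespace List

variable {α : Type*} {R : α → α → Prop} {Move : List α → List α → Prop}

theorem reflTransGen_append_cons_append_of_swap
    (hswap : ∀ l₁ l₂ a b, R a b → R b a → Move (l₁ ++ a :: b :: l₂) (l₁ ++ b :: a :: l₂))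
    {a : α} {s : List α} (t : List α) (hs : ∀ x ∈ s, R a x ∧ R x a) (l₀ : List α) :
    Relation.ReflTransGen Move (l₀ ++ a :: (s ++ t)) (l₀ ++ (s ++ a :: t)) := by
  induction s generalizing l₀ with
  | nil => exact .refl
  | cons x s ih =>
    obtain ⟨hax, hxa⟩ := hs x mem_cons_self
    have hrest := ih (fun y hy => hs y (mem_cons_of_mem x hy)) (l₀ ++ [x])
    simp only [append_assoc, cons_append, nil_append] at hrest ⊢
    exact .head (hswap l₀ _ a x hax hxa) hrest

theorem reflTransGen_of_perm_of_pairwise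
    (hswap : ∀ l₁ l₂ a b, R a b → R b a → Move (l₁ ++ a :: b :: l₂) (l₁ ++ b :: a :: l₂))
    {L L' : List α} (hperm : L.Perm L') (hL : L.Pairwise R) (hL' : L'.Pairwise R) :
    Relation.ReflTransGen Move L L' := by
  classical
  suffices ∀ l₀, Relation.ReflTransGen Move (l₀ ++ L) (l₀ ++ L') from this []
  induction L generalizing L' with
  | nil => rw [hperm.symm.eq_nil]; exact fun _ => .refl
  | cons a rest ih =>
    intro l₀
    obtain ⟨s, t, has, rfl, -⟩ := exists_erase_eq (hperm.subset mem_cons_self)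
    have hrest : rest.Perm (s ++ t) := (hperm.trans perm_middle).cons_inv
    have hst : (s ++ t).Pairwise R := hL'.sublist ((sublist_cons_self a t).append_left s)
    have hcomm : ∀ x ∈ s, R a x ∧ R x a := fun x hx =>
      have hx_rest : x ∈ rest := by
        rcases mem_cons.1 (hperm.symm.subset (mem_append_left _ hx)) with rfl | h
        exacts [absurd hx has, h]
      ⟨(pairwise_cons.1 hL).1 x hx_rest,
        (pairwise_append.1 hL').2.2 x hx a mem_cons_self⟩
    have hmove := ih hrest (pairwise_cons.1 hL).2 hst (l₀ ++ [a])
    simp only [append_assoc, cons_append, nil_append] at hmove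
    exact hmove.trans (reflTransGen_append_cons_append_of_swap hswap t hcomm l₀)

end List

theorem Prod.eq_of_sym2_mk_eq_of_lt {α : Type*} [LinearOrder α] {p q : α × α}
    (hp : p.1 < p.2) (hq : q.1 < q.2) (h : s(p.1, p.2) = s(q.1, q.2)) : p = q := by
  rcases Sym2.eq_iff.1 h with ⟨h₁, h₂⟩ | ⟨h₁, h₂⟩
  · exact Prod.ext h₁ h₂
  · exact absurd (h₁ ▸ h₂ ▸ hp) hq.not_gt

namespace SimpleGraph

variable {α : Type*} [LinearOrder α] {T : SimpleGraph α}

theorem mem_of_adj_of_forall_mem_edgeSet {M : List (α × α)} (hM : ∀ q ∈ M, q.1 < q.2)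
    (hcover : ∀ e ∈ T.edgeSet, ∃ q ∈ M, e = s(q.1, q.2)) {p : α × α} (hp : p.1 < p.2)
    (hadj : T.Adj p.1 p.2) : p ∈ M := by
  obtain ⟨q, hq, he⟩ := hcover s(p.1, p.2) hadj
  exact Prod.eq_of_sym2_mk_eq_of_lt hp (hM q hq) he ▸ hq

theorem perm_of_forall_mem_edgeSet {L L' : List (α × α)}
    (hL : ∀ p ∈ L, p.1 < p.2 ∧ T.Adj p.1 p.2) (hL' : ∀ p ∈ L', p.1 < p.2 ∧ T.Adj p.1 p.2)
    (hnd : L.Nodup) (hnd' : L'.Nodup)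
    (hcover : ∀ e ∈ T.edgeSet, ∃ q ∈ L, e = s(q.1, q.2))
    (hcover' : ∀ e ∈ T.edgeSet, ∃ q ∈ L', e = s(q.1, q.2)) : L.Perm L' :=
  (List.perm_ext_iff_of_nodup hnd hnd').2 fun p =>
    ⟨fun hp => mem_of_adj_of_forall_mem_edgeSet (fun q hq => (hL' q hq).1) hcover' (hL p hp).1
        (hL p hp).2,
      fun hp => mem_of_adj_of_forall_mem_edgeSet (fun q hq => (hL q hq).1) hcover (hL' p hp).1
        (hL' p hp).2⟩

end SimpleGraph

section ArcOrder

variable {n : ℕ}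

theorem CwBefore.asymm {v k k' : Fin n} (h : CwBefore v k k') : ¬ CwBefore v k' k := by
  simp only [CwBefore, Fin.lt_def] at h ⊢
  omega

def CwPrecedes (p q : Fin n × Fin n) : Prop :=
  ∀ v : Fin n, (p.1 = v ∨ p.2 = v) → (q.1 = v ∨ q.2 = v) →
    CwBefore v (otherEnd p v) (otherEnd q v)

theorem respects_iff_pairwise_cwPrecedes {L : List (Fin n × Fin n)} :
    Respects L ↔ L.Pairwise CwPrecedes :=
  (List.pairwise_iff_get (R := CwPrecedes)).symm

theorem commMove_of_cwPrecedes (l₁ l₂ : List (Fin n × Fin n)) (a b : Fin n × Fin n)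
    (hab : CwPrecedes a b) (hba : CwPrecedes b a) :
    CommMove (l₁ ++ a :: b :: l₂) (l₁ ++ b :: a :: l₂) := by
  have disjoint : ∀ v, (a.1 = v ∨ a.2 = v) → (b.1 = v ∨ b.2 = v) → False :=
    fun v ha hb => (hab v ha hb).asymm (hba v hb ha)
  exact ⟨l₁, l₂, a, b, fun h => disjoint _ (.inl rfl) (.inl h.symm),
    fun h => disjoint _ (.inl rfl) (.inr h.symm), fun h => disjoint _ (.inr rfl) (.inl h.symm),
    fun h => disjoint _ (.inr rfl) (.inr h.symm), rfl, rfl⟩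

end ArcOrder

theorem respects_related_by_comm_moves_general {n : ℕ} (T : SimpleGraph (Fin n))
    (L L' : List (Fin n × Fin n))
    (hedges : ∀ p ∈ L, p.1 < p.2 ∧ T.Adj p.1 p.2)
    (hedges' : ∀ p ∈ L', p.1 < p.2 ∧ T.Adj p.1 p.2)
    (hnodup : (L.map fun p => Sym2.mk p.1 p.2).Nodup)
    (hnodup' : (L'.map fun p => Sym2.mk p.1 p.2).Nodup)
    (hall : ∀ e, e ∈ T.edgeSet ↔ ∃ p ∈ L, e = Sym2.mk p.1 p.2)
    (hall' : ∀ e, e ∈ T.edgeSet ↔ ∃ p ∈ L', e = Sym2.mk p.1 p.2)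
    (hresp : Respects L) (hresp' : Respects L') :
    Relation.ReflTransGen CommMove L L' := by
  have hperm : L.Perm L' :=
    SimpleGraph.perm_of_forall_mem_edgeSet hedges hedges' (hnodup.of_map _) (hnodup'.of_map _)
      (fun e => (hall e).1) (fun e => (hall' e).1)
  exact List.reflTransGen_of_perm_of_pairwise commMove_of_cwPrecedes hperm
    (respects_iff_pairwise_cwPrecedes.1 hresp) (respects_iff_pairwise_cwPrecedes.1 hresp')

/-- Any two orderings of the edges of a noncrossing tree `T` on `[n]` that both respect
`T` are related by a sequence of adjacent swaps of vertex-disjoint consecutive edges. -/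
theorem respects_related_by_comm_moves {n : ℕ} (T : SimpleGraph (Fin n))
    (hT : T.IsTree) (hnc : Noncrossing T) (L L' : List (Fin n × Fin n))
    (hedges : ∀ p ∈ L, p.1 < p.2 ∧ T.Adj p.1 p.2)
    (hedges' : ∀ p ∈ L', p.1 < p.2 ∧ T.Adj p.1 p.2)
    (hnodup : (L.map fun p => Sym2.mk p.1 p.2).Nodup)
    (hnodup' : (L'.map fun p => Sym2.mk p.1 p.2).Nodup)
    (hall : ∀ e, e ∈ T.edgeSet ↔ ∃ p ∈ L, e = Sym2.mk p.1 p.2)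
    (hall' : ∀ e, e ∈ T.edgeSet ↔ ∃ p ∈ L', e = Sym2.mk p.1 p.2)
    (hresp : Respects L) (hresp' : Respects L') :
    Relation.ReflTransGen CommMove L L' :=
  respects_related_by_comm_moves_general T L L' hedges hedges' hnodup hnodup' hall hall' hresp
    hresp'
end
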